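/- arXiv:2409.04687 — 3 statements merged into one kernel-verified Lean document; each statement's English description precedes it below -/
import Mathlib

section
/- Let H be a Hopf G-coalgebra with antipode S. Then for all α, β ∈ G, Δ_{β⁻¹,α⁻¹} ∘ S_{αβ} = σ ∘ (S_α ⊗ S_β) ∘ Δ_{α,β}, where σ : H_{α⁻¹} ⊗ H_{β⁻¹} → H_{β⁻¹} ⊗ H_{α⁻¹} is the flip map; moreover ε ∘ S_e = ε. -/
open TensorProduct

noncomputable section

/-- Transport along an equality of indices for a family of modules. -/
def famCast {k : Type*} [CommSemiring k] {G : Type*} {H : G → Type*}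
    [∀ α, AddCommMonoid (H α)] [∀ α, Module k (H α)] {x y : G} (h : x = y) :
    H x →ₗ[k] H y := by subst h; exact LinearMap.id

/-- A Hopf `G`-coalgebra over `k`. -/
structure HopfGCoalgebra (k G : Type*) [Field k] [CommGroup G] where
  H : G → Type*
  [ring : ∀ α, Ring (H α)]
  [alg : ∀ α, Algebra k (H α)]
  Δ : ∀ α β : G, H (α * β) →ₐ[k] H α ⊗[k] H β
  ε : H 1 →ₐ[k] k
  coassoc : ∀ α β γ : G,
    (TensorProduct.assoc k (H α) (H β) (H γ)).toLinearMap ∘ₗ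
      TensorProduct.map (Δ α β).toLinearMap LinearMap.id ∘ₗ (Δ (α * β) γ).toLinearMap
    = TensorProduct.map LinearMap.id (Δ β γ).toLinearMap ∘ₗ (Δ α (β * γ)).toLinearMap ∘ₗ
        famCast (k := k) (mul_assoc α β γ)
  counit_left : ∀ α : G,
    (TensorProduct.lid k (H α)).toLinearMap ∘ₗ
      TensorProduct.map ε.toLinearMap LinearMap.id ∘ₗ (Δ 1 α).toLinearMap
    = famCast (k := k) (one_mul α)
  counit_right : ∀ α : G,
    (TensorProduct.rid k (H α)).toLinearMap ∘ₗ
      TensorProduct.map LinearMap.id ε.toLinearMap ∘ₗ (Δ α 1).toLinearMap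
    = famCast (k := k) (mul_one α)
  S : ∀ α : G, H α →ₗ[k] H α⁻¹
  antipode_left : ∀ α : G,
    LinearMap.mul' k (H α) ∘ₗ
      TensorProduct.map (famCast (k := k) (inv_inv α) ∘ₗ S α⁻¹) LinearMap.id ∘ₗ
      (Δ α⁻¹ α).toLinearMap ∘ₗ famCast (k := k) (inv_mul_cancel α).symm
    = Algebra.linearMap k (H α) ∘ₗ ε.toLinearMap
  antipode_right : ∀ α : G,
    LinearMap.mul' k (H α⁻¹) ∘ₗ
      TensorProduct.map LinearMap.id (S α) ∘ₗ
      (Δ α⁻¹ α).toLinearMap ∘ₗ famCast (k := k) (inv_mul_cancel α).symm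
    = Algebra.linearMap k (H α⁻¹) ∘ₗ ε.toLinearMap

attribute [instance] HopfGCoalgebra.ring HopfGCoalgebra.alg

set_option linter.unusedSectionVars false
set_option maxHeartbeats 1000000

namespace Aux
variable {k : Type*} [Field k] {G : Type*} [CommGroup G]

section fam
variable {H : G → Type*} [∀ α, AddCommMonoid (H α)] [∀ α, Module k (H α)]
@[simp] lemma famCast_refl {x : G} (h : x = x) :
    famCast (k := k) (H := H) h = LinearMap.id := rfl
lemma famCast_trans {x y z : G} (h1 : x = y) (h2 : y = z) (h3 : x = z) :
    famCast (k := k) (H := H) h2 ∘ₗ famCast (k := k) h1 = famCast (k := k) h3 := by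
  subst h1; subst h2; rfl
lemma comp_famCast_cancel {M : Type*} [AddCommMonoid M] [Module k M]
    {x y : G} (h : x = y) {f g : H y →ₗ[k] M}
    (hfg : f ∘ₗ famCast (k := k) h = g ∘ₗ famCast (k := k) h) : f = g := by
  subst h; simpa using hfg
end fam

variable (Hc : HopfGCoalgebra k G)

lemma S_comp_famCast {x y : G} (h : x = y) (h' : x⁻¹ = y⁻¹) :
    Hc.S y ∘ₗ famCast (k := k) h = famCast (k := k) h' ∘ₗ Hc.S x := by
  subst h; rfl

lemma Δ_comp_famCast {γ γ' δ δ' : G} (hγ : γ = γ') (hδ : δ = δ') (hμ : γ * δ = γ' * δ') :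
    (Hc.Δ γ' δ').toLinearMap ∘ₗ famCast (k := k) hμ =
      TensorProduct.map (famCast (k := k) hγ) (famCast (k := k) hδ) ∘ₗ (Hc.Δ γ δ).toLinearMap := by
  subst hγ; subst hδ
  simp

lemma famCast_comp_mul' {x y : G} (h : x = y) :
    famCast (k := k) h ∘ₗ LinearMap.mul' k (Hc.H x) =
      LinearMap.mul' k (Hc.H y) ∘ₗ
        TensorProduct.map (famCast (k := k) h) (famCast (k := k) h) := by
  subst h; simp

lemma famCast_comp_algebraMap {x y : G} (h : x = y) :
    famCast (k := k) h ∘ₗ Algebra.linearMap k (Hc.H x) = Algebra.linearMap k (Hc.H y) := by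
  subst h; simp

lemma algHom_comp_mul' {A C : Type*} [Ring A] [Algebra k A] [Ring C] [Algebra k C]
    (φ : A →ₐ[k] C) :
    φ.toLinearMap ∘ₗ LinearMap.mul' k A =
      LinearMap.mul' k C ∘ₗ TensorProduct.map φ.toLinearMap φ.toLinearMap := by
  refine TensorProduct.ext' fun a b => ?_; simp

lemma algHom_comp_linearMap {A C : Type*} [Ring A] [Algebra k A] [Ring C] [Algebra k C]
    (φ : A →ₐ[k] C) :
    φ.toLinearMap ∘ₗ Algebra.linearMap k A = Algebra.linearMap k C := by
  ext c; simp

/-- Convolution product. -/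
def conv {B : Type*} [Ring B] [Algebra k B] {γ δ : G}
    (f : Hc.H γ →ₗ[k] B) (g : Hc.H δ →ₗ[k] B) : Hc.H (γ * δ) →ₗ[k] B :=
  LinearMap.mul' k B ∘ₗ TensorProduct.map f g ∘ₗ (Hc.Δ γ δ).toLinearMap

/-- Convolution unit. -/
def uB (B : Type*) [Ring B] [Algebra k B] : Hc.H 1 →ₗ[k] B :=
  Algebra.linearMap k B ∘ₗ Hc.ε.toLinearMap

variable {B : Type*} [Ring B] [Algebra k B]

lemma conv_unit_left {δ : G} (g : Hc.H δ →ₗ[k] B) :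
    conv Hc (uB Hc B) g = g ∘ₗ famCast (k := k) (one_mul δ) := by
  have h1 : LinearMap.mul' k B ∘ₗ TensorProduct.map (Algebra.linearMap k B ∘ₗ Hc.ε.toLinearMap) g
      = g ∘ₗ (TensorProduct.lid k (Hc.H δ)).toLinearMap ∘ₗ
          TensorProduct.map Hc.ε.toLinearMap LinearMap.id := by
    refine TensorProduct.ext' fun a m => ?_
    simp [← Algebra.smul_def]
  rw [conv, uB, ← LinearMap.comp_assoc, h1]
  rw [LinearMap.comp_assoc, LinearMap.comp_assoc, Hc.counit_left]

lemma conv_unit_right {γ : G} (f : Hc.H γ →ₗ[k] B) :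
    conv Hc f (uB Hc B) = f ∘ₗ famCast (k := k) (mul_one γ) := by
  have h1 : LinearMap.mul' k B ∘ₗ TensorProduct.map f (Algebra.linearMap k B ∘ₗ Hc.ε.toLinearMap)
      = f ∘ₗ (TensorProduct.rid k (Hc.H γ)).toLinearMap ∘ₗ
          TensorProduct.map LinearMap.id Hc.ε.toLinearMap := by
    refine TensorProduct.ext' fun m a => ?_
    simp [← Algebra.commutes, ← Algebra.smul_def]
  rw [conv, uB, ← LinearMap.comp_assoc, h1]
  rw [LinearMap.comp_assoc, LinearMap.comp_assoc, Hc.counit_right]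

lemma conv_cast_left {γ γ' δ : G} (h : γ = γ') (hμ : γ * δ = γ' * δ)
    (f : Hc.H γ' →ₗ[k] B) (g : Hc.H δ →ₗ[k] B) :
    conv Hc (f ∘ₗ famCast (k := k) h) g = conv Hc f g ∘ₗ famCast (k := k) hμ := by
  subst h; simp [conv]

lemma conv_cast_right {γ δ δ' : G} (h : δ = δ') (hμ : γ * δ = γ * δ')
    (f : Hc.H γ →ₗ[k] B) (g : Hc.H δ' →ₗ[k] B) :
    conv Hc f (g ∘ₗ famCast (k := k) h) = conv Hc f g ∘ₗ famCast (k := k) hμ := by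
  subst h; simp [conv]

lemma equiv_symm_comp {M N : Type*} [AddCommMonoid M] [AddCommMonoid N]
    [Module k M] [Module k N] (e : M ≃ₗ[k] N) :
    e.symm.toLinearMap ∘ₗ e.toLinearMap = LinearMap.id := by ext x; simp

lemma mul'_assoc_key {X Y Z : Type*} [AddCommMonoid X] [AddCommMonoid Y] [AddCommMonoid Z]
    [Module k X] [Module k Y] [Module k Z]
    (f : X →ₗ[k] B) (g : Y →ₗ[k] B) (hm : Z →ₗ[k] B) :
    LinearMap.mul' k B ∘ₗ TensorProduct.map (LinearMap.mul' k B ∘ₗ TensorProduct.map f g) hm =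
      (LinearMap.mul' k B ∘ₗ TensorProduct.map f (LinearMap.mul' k B ∘ₗ TensorProduct.map g hm))
        ∘ₗ (TensorProduct.assoc k X Y Z).toLinearMap := by
  refine TensorProduct.ext_threefold fun x y z => ?_; simp [mul_assoc]

lemma equiv_comp_symm {M N : Type*} [AddCommMonoid M] [AddCommMonoid N]
    [Module k M] [Module k N] (e : M ≃ₗ[k] N) :
    e.toLinearMap ∘ₗ e.symm.toLinearMap = LinearMap.id := by ext x; simp

lemma conv_assoc {γ δ ρ : G} (f : Hc.H γ →ₗ[k] B) (g : Hc.H δ →ₗ[k] B) (hm : Hc.H ρ →ₗ[k] B) :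
    conv Hc (conv Hc f g) hm
      = conv Hc f (conv Hc g hm) ∘ₗ famCast (k := k) (mul_assoc γ δ ρ) := by
  have co : TensorProduct.map (Hc.Δ γ δ).toLinearMap LinearMap.id ∘ₗ (Hc.Δ (γ*δ) ρ).toLinearMap
      = (TensorProduct.assoc k (Hc.H γ) (Hc.H δ) (Hc.H ρ)).symm.toLinearMap ∘ₗ
          TensorProduct.map LinearMap.id (Hc.Δ δ ρ).toLinearMap ∘ₗ
            (Hc.Δ γ (δ*ρ)).toLinearMap ∘ₗ famCast (k := k) (mul_assoc γ δ ρ) := by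
    rw [← Hc.coassoc, ← LinearMap.comp_assoc, ← LinearMap.comp_assoc, equiv_symm_comp,
      LinearMap.id_comp]
  have e1 : TensorProduct.map (LinearMap.mul' k B ∘ₗ TensorProduct.map f g ∘ₗ
        (Hc.Δ γ δ).toLinearMap) hm
      = TensorProduct.map (LinearMap.mul' k B ∘ₗ TensorProduct.map f g) hm ∘ₗ
          TensorProduct.map (Hc.Δ γ δ).toLinearMap LinearMap.id := by
    rw [← TensorProduct.map_comp, LinearMap.comp_id, LinearMap.comp_assoc]
  have e2 : LinearMap.mul' k B ∘ₗ
        TensorProduct.map (LinearMap.mul' k B ∘ₗ TensorProduct.map f g) hm ∘ₗ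
        (TensorProduct.assoc k (Hc.H γ) (Hc.H δ) (Hc.H ρ)).symm.toLinearMap
      = LinearMap.mul' k B ∘ₗ
          TensorProduct.map f (LinearMap.mul' k B ∘ₗ TensorProduct.map g hm) := by
    rw [← LinearMap.comp_assoc, mul'_assoc_key, LinearMap.comp_assoc, equiv_comp_symm,
      LinearMap.comp_id]
  have e3 : TensorProduct.map f (LinearMap.mul' k B ∘ₗ TensorProduct.map g hm) ∘ₗ
        TensorProduct.map LinearMap.id (Hc.Δ δ ρ).toLinearMap
      = TensorProduct.map f (conv Hc g hm) := by
    rw [← TensorProduct.map_comp, LinearMap.comp_id]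
    simp only [conv, LinearMap.comp_assoc]
  simp only [conv]
  rw [e1]
  show (LinearMap.mul' k B ∘ₗ
      TensorProduct.map (LinearMap.mul' k B ∘ₗ TensorProduct.map f g) hm) ∘ₗ
      (TensorProduct.map (Hc.Δ γ δ).toLinearMap LinearMap.id ∘ₗ (Hc.Δ (γ*δ) ρ).toLinearMap) = _
  rw [co]
  show (LinearMap.mul' k B ∘ₗ
      TensorProduct.map (LinearMap.mul' k B ∘ₗ TensorProduct.map f g) hm ∘ₗ
      (TensorProduct.assoc k (Hc.H γ) (Hc.H δ) (Hc.H ρ)).symm.toLinearMap) ∘ₗ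
      (TensorProduct.map LinearMap.id (Hc.Δ δ ρ).toLinearMap ∘ₗ
        (Hc.Δ γ (δ*ρ)).toLinearMap ∘ₗ famCast (k := k) (mul_assoc γ δ ρ)) = _
  rw [e2]
  show LinearMap.mul' k B ∘ₗ
      (TensorProduct.map f (LinearMap.mul' k B ∘ₗ TensorProduct.map g hm) ∘ₗ
        TensorProduct.map LinearMap.id (Hc.Δ δ ρ).toLinearMap) ∘ₗ
      (Hc.Δ γ (δ*ρ)).toLinearMap ∘ₗ famCast (k := k) (mul_assoc γ δ ρ) = _
  rw [e3]
  rfl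

lemma comp_famCast_symm_eq {H : G → Type*} [∀ α, AddCommMonoid (H α)] [∀ α, Module k (H α)]
    {M : Type*} [AddCommMonoid M] [Module k M]
    {x y : G} (h : x = y) (f : H x →ₗ[k] M) (g : H y →ₗ[k] M) :
    f ∘ₗ famCast (k := k) h.symm = g ↔ f = g ∘ₗ famCast (k := k) h := by
  subst h; simp

lemma conv_PR (α β : G) (h1 : (α*β)*(β⁻¹*α⁻¹) = 1) :
    conv Hc ((Hc.Δ β⁻¹ α⁻¹).toLinearMap ∘ₗ famCast (k := k) (mul_inv_rev α β) ∘ₗ Hc.S (α * β))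
        (Hc.Δ β⁻¹ α⁻¹).toLinearMap
      = uB Hc (Hc.H β⁻¹ ⊗[k] Hc.H α⁻¹) ∘ₗ famCast (k := k) h1 := by
  have h : α * β = (β⁻¹ * α⁻¹)⁻¹ := by rw [mul_inv_rev, inv_inv, inv_inv]
  have h' : (α * β)⁻¹ = ((β⁻¹ * α⁻¹)⁻¹)⁻¹ := by rw [← h]
  have hμ : (α*β)*(β⁻¹*α⁻¹) = (β⁻¹*α⁻¹)⁻¹*(β⁻¹*α⁻¹) := by rw [← h]
  -- rearranged antipode axiom
  have A : (LinearMap.mul' k (Hc.H (β⁻¹*α⁻¹)) ∘ₗ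
      TensorProduct.map (famCast (k := k) (inv_inv (β⁻¹*α⁻¹)) ∘ₗ Hc.S (β⁻¹*α⁻¹)⁻¹) LinearMap.id ∘ₗ
      (Hc.Δ ((β⁻¹*α⁻¹)⁻¹) (β⁻¹*α⁻¹)).toLinearMap) ∘ₗ
        famCast (k := k) (inv_mul_cancel (β⁻¹*α⁻¹)).symm
      = Algebra.linearMap k (Hc.H (β⁻¹*α⁻¹)) ∘ₗ Hc.ε.toLinearMap :=
    Hc.antipode_left (β⁻¹*α⁻¹)
  rw [comp_famCast_symm_eq (inv_mul_cancel (β⁻¹*α⁻¹))] at A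
  -- the S-with-cast identity
  have e1 : famCast (k := k) (mul_inv_rev α β) ∘ₗ Hc.S (α * β)
      = (famCast (k := k) (inv_inv (β⁻¹*α⁻¹)) ∘ₗ Hc.S (β⁻¹*α⁻¹)⁻¹) ∘ₗ famCast (k := k) h := by
    show _ = famCast (k := k) (inv_inv (β⁻¹*α⁻¹)) ∘ₗ (Hc.S (β⁻¹*α⁻¹)⁻¹ ∘ₗ famCast (k := k) h)
    rw [S_comp_famCast Hc h h']
    show _ = (famCast (k := k) (inv_inv (β⁻¹*α⁻¹)) ∘ₗ famCast (k := k) h') ∘ₗ Hc.S (α * β)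
    rw [famCast_trans h' (inv_inv (β⁻¹*α⁻¹)) (mul_inv_rev α β)]
  -- the Δ-with-cast identity
  have e2 : TensorProduct.map (famCast (k := k) h) LinearMap.id ∘ₗ
        (Hc.Δ (α*β) (β⁻¹*α⁻¹)).toLinearMap
      = (Hc.Δ ((β⁻¹*α⁻¹)⁻¹) (β⁻¹*α⁻¹)).toLinearMap ∘ₗ famCast (k := k) hμ := by
    rw [Δ_comp_famCast Hc h rfl hμ]
    simp
  have m2 : LinearMap.mul' k (Hc.H β⁻¹ ⊗[k] Hc.H α⁻¹) ∘ₗ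
        TensorProduct.map (Hc.Δ β⁻¹ α⁻¹).toLinearMap (Hc.Δ β⁻¹ α⁻¹).toLinearMap
      = (Hc.Δ β⁻¹ α⁻¹).toLinearMap ∘ₗ LinearMap.mul' k (Hc.H (β⁻¹*α⁻¹)) :=
    (algHom_comp_mul' (Hc.Δ β⁻¹ α⁻¹)).symm
  have m1 : TensorProduct.map
        ((Hc.Δ β⁻¹ α⁻¹).toLinearMap ∘ₗ famCast (k := k) (mul_inv_rev α β) ∘ₗ Hc.S (α * β))
        (Hc.Δ β⁻¹ α⁻¹).toLinearMap
      = TensorProduct.map (Hc.Δ β⁻¹ α⁻¹).toLinearMap (Hc.Δ β⁻¹ α⁻¹).toLinearMap ∘ₗ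
          TensorProduct.map (famCast (k := k) (mul_inv_rev α β) ∘ₗ Hc.S (α * β))
            LinearMap.id := by
    rw [← TensorProduct.map_comp, LinearMap.comp_id]
  rw [conv, m1]
  show (LinearMap.mul' k (Hc.H β⁻¹ ⊗[k] Hc.H α⁻¹) ∘ₗ
      TensorProduct.map (Hc.Δ β⁻¹ α⁻¹).toLinearMap (Hc.Δ β⁻¹ α⁻¹).toLinearMap) ∘ₗ
      TensorProduct.map (famCast (k := k) (mul_inv_rev α β) ∘ₗ Hc.S (α * β)) LinearMap.id ∘ₗ
      (Hc.Δ (α*β) (β⁻¹*α⁻¹)).toLinearMap = _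
  rw [m2, e1]
  have m3 : TensorProduct.map
        ((famCast (k := k) (inv_inv (β⁻¹*α⁻¹)) ∘ₗ Hc.S (β⁻¹*α⁻¹)⁻¹) ∘ₗ famCast (k := k) h)
        (LinearMap.id : Hc.H (β⁻¹*α⁻¹) →ₗ[k] Hc.H (β⁻¹*α⁻¹))
      = TensorProduct.map (famCast (k := k) (inv_inv (β⁻¹*α⁻¹)) ∘ₗ Hc.S (β⁻¹*α⁻¹)⁻¹)
          LinearMap.id ∘ₗ TensorProduct.map (famCast (k := k) h) LinearMap.id := by
    rw [← TensorProduct.map_comp, LinearMap.comp_id]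
  rw [m3]
  show ((Hc.Δ β⁻¹ α⁻¹).toLinearMap ∘ₗ LinearMap.mul' k (Hc.H (β⁻¹*α⁻¹))) ∘ₗ
      TensorProduct.map (famCast (k := k) (inv_inv (β⁻¹*α⁻¹)) ∘ₗ Hc.S (β⁻¹*α⁻¹)⁻¹)
        LinearMap.id ∘ₗ
      (TensorProduct.map (famCast (k := k) h) LinearMap.id ∘ₗ
        (Hc.Δ (α*β) (β⁻¹*α⁻¹)).toLinearMap) = _
  rw [e2]
  show (Hc.Δ β⁻¹ α⁻¹).toLinearMap ∘ₗ
      (LinearMap.mul' k (Hc.H (β⁻¹*α⁻¹)) ∘ₗ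
        TensorProduct.map (famCast (k := k) (inv_inv (β⁻¹*α⁻¹)) ∘ₗ Hc.S (β⁻¹*α⁻¹)⁻¹)
          LinearMap.id ∘ₗ
        (Hc.Δ ((β⁻¹*α⁻¹)⁻¹) (β⁻¹*α⁻¹)).toLinearMap) ∘ₗ famCast (k := k) hμ = _
  rw [A]
  show ((Hc.Δ β⁻¹ α⁻¹).toLinearMap ∘ₗ Algebra.linearMap k (Hc.H (β⁻¹*α⁻¹))) ∘ₗ
      Hc.ε.toLinearMap ∘ₗ
      (famCast (k := k) (inv_mul_cancel (β⁻¹*α⁻¹)) ∘ₗ famCast (k := k) hμ) = _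
  rw [algHom_comp_linearMap, famCast_trans hμ (inv_mul_cancel (β⁻¹*α⁻¹)) h1]
  rfl

lemma map_id_comp {M N P Q : Type*} [AddCommMonoid M] [AddCommMonoid N] [AddCommMonoid P]
    [AddCommMonoid Q] [Module k M] [Module k N] [Module k P] [Module k Q]
    (f : N →ₗ[k] P) (g : P →ₗ[k] Q) :
    TensorProduct.map (LinearMap.id : M →ₗ[k] M) (g ∘ₗ f)
      = TensorProduct.map LinearMap.id g ∘ₗ TensorProduct.map LinearMap.id f := by
  rw [← TensorProduct.map_comp, LinearMap.id_comp]

lemma ext3' {M N P Q : Type*} [AddCommMonoid M] [AddCommMonoid N] [AddCommMonoid P]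
    [AddCommMonoid Q] [Module k M] [Module k N] [Module k P] [Module k Q]
    {f g : M ⊗[k] (N ⊗[k] P) →ₗ[k] Q}
    (h : ∀ m n p, f (m ⊗ₜ (n ⊗ₜ p)) = g (m ⊗ₜ (n ⊗ₜ p))) : f = g := by
  refine TensorProduct.ext (LinearMap.ext fun m => TensorProduct.ext' fun n p => ?_)
  simpa using h m n p

lemma ext4' {M N P Q W : Type*} [AddCommMonoid M] [AddCommMonoid N] [AddCommMonoid P]
    [AddCommMonoid Q] [AddCommMonoid W]
    [Module k M] [Module k N] [Module k P] [Module k Q] [Module k W]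
    {f g : M ⊗[k] ((N ⊗[k] P) ⊗[k] Q) →ₗ[k] W}
    (h : ∀ m n p q, f (m ⊗ₜ ((n ⊗ₜ p) ⊗ₜ q)) = g (m ⊗ₜ ((n ⊗ₜ p) ⊗ₜ q))) : f = g := by
  refine TensorProduct.ext (LinearMap.ext fun m => TensorProduct.ext_threefold fun n p q => ?_)
  simpa using h m n p q

lemma conv_RQ (α β : G) (h2 : (β⁻¹*α⁻¹)*(α*β) = 1) :
    conv Hc (Hc.Δ β⁻¹ α⁻¹).toLinearMap
        ((TensorProduct.comm k (Hc.H α⁻¹) (Hc.H β⁻¹)).toLinearMap ∘ₗ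
          TensorProduct.map (Hc.S α) (Hc.S β) ∘ₗ (Hc.Δ α β).toLinearMap)
      = uB Hc (Hc.H β⁻¹ ⊗[k] Hc.H α⁻¹) ∘ₗ famCast (k := k) h2 := by
  -- rearranged coassociativity at (β⁻¹, α⁻¹, αβ)
  have s2 : TensorProduct.map (Hc.Δ β⁻¹ α⁻¹).toLinearMap
        (LinearMap.id : Hc.H (α*β) →ₗ[k] Hc.H (α*β)) ∘ₗ (Hc.Δ (β⁻¹*α⁻¹) (α*β)).toLinearMap
      = (TensorProduct.assoc k (Hc.H β⁻¹) (Hc.H α⁻¹) (Hc.H (α*β))).symm.toLinearMap ∘ₗ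
          TensorProduct.map LinearMap.id (Hc.Δ α⁻¹ (α*β)).toLinearMap ∘ₗ
          (Hc.Δ β⁻¹ (α⁻¹*(α*β))).toLinearMap ∘ₗ famCast (k := k) (mul_assoc β⁻¹ α⁻¹ (α*β)) := by
    rw [← Hc.coassoc, ← LinearMap.comp_assoc, ← LinearMap.comp_assoc, equiv_symm_comp,
      LinearMap.id_comp]
  -- rearranged coassociativity at (α⁻¹, α, β)
  have s5b : TensorProduct.map (LinearMap.id : Hc.H α⁻¹ →ₗ[k] Hc.H α⁻¹)
        (Hc.Δ α β).toLinearMap ∘ₗ (Hc.Δ α⁻¹ (α*β)).toLinearMap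
      = (TensorProduct.assoc k (Hc.H α⁻¹) (Hc.H α) (Hc.H β)).toLinearMap ∘ₗ
          TensorProduct.map (Hc.Δ α⁻¹ α).toLinearMap LinearMap.id ∘ₗ
          (Hc.Δ (α⁻¹*α) β).toLinearMap ∘ₗ famCast (k := k) (mul_assoc α⁻¹ α β).symm := by
    have C : ((TensorProduct.assoc k (Hc.H α⁻¹) (Hc.H α) (Hc.H β)).toLinearMap ∘ₗ
          TensorProduct.map (Hc.Δ α⁻¹ α).toLinearMap LinearMap.id ∘ₗ
          (Hc.Δ (α⁻¹*α) β).toLinearMap)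
        = (TensorProduct.map LinearMap.id (Hc.Δ α β).toLinearMap ∘ₗ
            (Hc.Δ α⁻¹ (α*β)).toLinearMap) ∘ₗ famCast (k := k) (mul_assoc α⁻¹ α β) :=
      Hc.coassoc α⁻¹ α β
    exact ((comp_famCast_symm_eq (mul_assoc α⁻¹ α β) _ _).mpr C).symm
  -- rearranged antipode axioms
  have s9 : (LinearMap.mul' k (Hc.H α⁻¹) ∘ₗ
        TensorProduct.map LinearMap.id (Hc.S α)) ∘ₗ (Hc.Δ α⁻¹ α).toLinearMap
      = (Algebra.linearMap k (Hc.H α⁻¹) ∘ₗ Hc.ε.toLinearMap) ∘ₗ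
          famCast (k := k) (inv_mul_cancel α) := by
    have A : ((LinearMap.mul' k (Hc.H α⁻¹) ∘ₗ TensorProduct.map LinearMap.id (Hc.S α)) ∘ₗ
          (Hc.Δ α⁻¹ α).toLinearMap) ∘ₗ famCast (k := k) (inv_mul_cancel α).symm
        = Algebra.linearMap k (Hc.H α⁻¹) ∘ₗ Hc.ε.toLinearMap := Hc.antipode_right α
    exact (comp_famCast_symm_eq (inv_mul_cancel α) _ _).mp A
  have s13 : (LinearMap.mul' k (Hc.H β⁻¹) ∘ₗ
        TensorProduct.map LinearMap.id (Hc.S β)) ∘ₗ (Hc.Δ β⁻¹ β).toLinearMap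
      = (Algebra.linearMap k (Hc.H β⁻¹) ∘ₗ Hc.ε.toLinearMap) ∘ₗ
          famCast (k := k) (inv_mul_cancel β) := by
    have A : ((LinearMap.mul' k (Hc.H β⁻¹) ∘ₗ TensorProduct.map LinearMap.id (Hc.S β)) ∘ₗ
          (Hc.Δ β⁻¹ β).toLinearMap) ∘ₗ famCast (k := k) (inv_mul_cancel β).symm
        = Algebra.linearMap k (Hc.H β⁻¹) ∘ₗ Hc.ε.toLinearMap := Hc.antipode_right β
    exact (comp_famCast_symm_eq (inv_mul_cancel β) _ _).mp A
  -- assoc.symm naturality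
  have s3 : TensorProduct.map (LinearMap.id : Hc.H β⁻¹ ⊗[k] Hc.H α⁻¹ →ₗ[k] _)
        ((TensorProduct.comm k (Hc.H α⁻¹) (Hc.H β⁻¹)).toLinearMap ∘ₗ
          TensorProduct.map (Hc.S α) (Hc.S β) ∘ₗ (Hc.Δ α β).toLinearMap) ∘ₗ
        (TensorProduct.assoc k (Hc.H β⁻¹) (Hc.H α⁻¹) (Hc.H (α*β))).symm.toLinearMap
      = (TensorProduct.assoc k (Hc.H β⁻¹) (Hc.H α⁻¹)
            (Hc.H β⁻¹ ⊗[k] Hc.H α⁻¹)).symm.toLinearMap ∘ₗ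
          TensorProduct.map LinearMap.id (TensorProduct.map LinearMap.id
            ((TensorProduct.comm k (Hc.H α⁻¹) (Hc.H β⁻¹)).toLinearMap ∘ₗ
              TensorProduct.map (Hc.S α) (Hc.S β) ∘ₗ (Hc.Δ α β).toLinearMap)) := by
    refine ext3' fun x y z => ?_
    simp
  -- the fundamental pointwise rearrangement
  have claimA : LinearMap.mul' k (Hc.H β⁻¹ ⊗[k] Hc.H α⁻¹) ∘ₗ
        (TensorProduct.assoc k (Hc.H β⁻¹) (Hc.H α⁻¹)
          (Hc.H β⁻¹ ⊗[k] Hc.H α⁻¹)).symm.toLinearMap ∘ₗ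
        TensorProduct.map LinearMap.id (TensorProduct.map LinearMap.id
          (TensorProduct.comm k (Hc.H α⁻¹) (Hc.H β⁻¹)).toLinearMap) ∘ₗ
        TensorProduct.map LinearMap.id (TensorProduct.map LinearMap.id
          (TensorProduct.map (Hc.S α) (Hc.S β))) ∘ₗ
        TensorProduct.map LinearMap.id
          (TensorProduct.assoc k (Hc.H α⁻¹) (Hc.H α) (Hc.H β)).toLinearMap
      = TensorProduct.map
          (LinearMap.mul' k (Hc.H β⁻¹) ∘ₗ TensorProduct.map LinearMap.id (Hc.S β))
          (LinearMap.mul' k (Hc.H α⁻¹) ∘ₗ TensorProduct.map LinearMap.id (Hc.S α)) ∘ₗ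
        (TensorProduct.assoc k (Hc.H β⁻¹) (Hc.H β)
          (Hc.H α⁻¹ ⊗[k] Hc.H α)).symm.toLinearMap ∘ₗ
        TensorProduct.map LinearMap.id
          (TensorProduct.comm k (Hc.H α⁻¹ ⊗[k] Hc.H α) (Hc.H β)).toLinearMap := by
    refine ext4' fun x a b d => ?_
    simp [Algebra.TensorProduct.tmul_mul_tmul]
  -- naturality of the shuffle
  have s7 : (TensorProduct.assoc k (Hc.H β⁻¹) (Hc.H β)
          (Hc.H α⁻¹ ⊗[k] Hc.H α)).symm.toLinearMap ∘ₗ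
        TensorProduct.map LinearMap.id
          (TensorProduct.comm k (Hc.H α⁻¹ ⊗[k] Hc.H α) (Hc.H β)).toLinearMap ∘ₗ
        TensorProduct.map LinearMap.id
          (TensorProduct.map (Hc.Δ α⁻¹ α).toLinearMap LinearMap.id)
      = TensorProduct.map LinearMap.id (Hc.Δ α⁻¹ α).toLinearMap ∘ₗ
          (TensorProduct.assoc k (Hc.H β⁻¹) (Hc.H β)
            (Hc.H (α⁻¹*α))).symm.toLinearMap ∘ₗ
          TensorProduct.map LinearMap.id
            (TensorProduct.comm k (Hc.H (α⁻¹*α)) (Hc.H β)).toLinearMap := by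
    refine ext3' fun x w d => ?_
    simp
  -- claim B : extracting the scalar
  have s10 : TensorProduct.map
        (LinearMap.mul' k (Hc.H β⁻¹) ∘ₗ TensorProduct.map LinearMap.id (Hc.S β))
        (Algebra.linearMap k (Hc.H α⁻¹) ∘ₗ Hc.ε.toLinearMap ∘ₗ
          famCast (k := k) (inv_mul_cancel α)) ∘ₗ
        (TensorProduct.assoc k (Hc.H β⁻¹) (Hc.H β) (Hc.H (α⁻¹*α))).symm.toLinearMap ∘ₗ
        TensorProduct.map LinearMap.id
          (TensorProduct.comm k (Hc.H (α⁻¹*α)) (Hc.H β)).toLinearMap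
      = ((TensorProduct.mk k (Hc.H β⁻¹) (Hc.H α⁻¹)).flip 1) ∘ₗ
          (LinearMap.mul' k (Hc.H β⁻¹) ∘ₗ TensorProduct.map LinearMap.id (Hc.S β)) ∘ₗ
          TensorProduct.map LinearMap.id ((TensorProduct.lid k (Hc.H β)).toLinearMap ∘ₗ
            TensorProduct.map (Hc.ε.toLinearMap ∘ₗ famCast (k := k) (inv_mul_cancel α))
              LinearMap.id) := by
    refine ext3' fun x w d => ?_
    simp [Algebra.algebraMap_eq_smul_one, tmul_smul, smul_tmul']
  -- unit of B
  have s14 : ((TensorProduct.mk k (Hc.H β⁻¹) (Hc.H α⁻¹)).flip 1) ∘ₗ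
        Algebra.linearMap k (Hc.H β⁻¹)
      = Algebra.linearMap k (Hc.H β⁻¹ ⊗[k] Hc.H α⁻¹) := by
    apply LinearMap.ext; intro c
    simp [Algebra.TensorProduct.algebraMap_apply]
  have c6 : α⁻¹*(α*β) = β := by rw [← mul_assoc, inv_mul_cancel, one_mul]
  have c7 : β⁻¹*(α⁻¹*(α*β)) = β⁻¹*β := by rw [c6]
  have hh : (α⁻¹*α)*β = 1*β := by rw [inv_mul_cancel]
  have g1 : α⁻¹*(α*β) = 1*β := (mul_assoc α⁻¹ α β).symm.trans hh
  have c17 : (β⁻¹*α⁻¹)*(α*β) = β⁻¹*β := (mul_assoc β⁻¹ α⁻¹ (α*β)).trans c7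
  -- counit collapse
  have s11 : (TensorProduct.lid k (Hc.H β)).toLinearMap ∘ₗ
        TensorProduct.map (Hc.ε.toLinearMap ∘ₗ famCast (k := k) (inv_mul_cancel α))
          LinearMap.id ∘ₗ
        (Hc.Δ (α⁻¹*α) β).toLinearMap ∘ₗ famCast (k := k) (mul_assoc α⁻¹ α β).symm
      = famCast (k := k) c6 := by
    have m : TensorProduct.map (Hc.ε.toLinearMap ∘ₗ famCast (k := k) (inv_mul_cancel α))
          (LinearMap.id : Hc.H β →ₗ[k] Hc.H β)
        = TensorProduct.map Hc.ε.toLinearMap LinearMap.id ∘ₗ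
            TensorProduct.map (famCast (k := k) (inv_mul_cancel α)) LinearMap.id := by
      rw [← TensorProduct.map_comp, LinearMap.comp_id]
    have d : TensorProduct.map (famCast (k := k) (inv_mul_cancel α))
          (LinearMap.id : Hc.H β →ₗ[k] Hc.H β) ∘ₗ (Hc.Δ (α⁻¹*α) β).toLinearMap
        = (Hc.Δ 1 β).toLinearMap ∘ₗ famCast (k := k) hh := by
      rw [Δ_comp_famCast Hc (inv_mul_cancel α) rfl hh]; simp
    rw [m]
    show (TensorProduct.lid k (Hc.H β)).toLinearMap ∘ₗ
        TensorProduct.map Hc.ε.toLinearMap LinearMap.id ∘ₗ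
        ((TensorProduct.map (famCast (k := k) (inv_mul_cancel α)) LinearMap.id ∘ₗ
          (Hc.Δ (α⁻¹*α) β).toLinearMap) ∘ₗ famCast (k := k) (mul_assoc α⁻¹ α β).symm) = _
    rw [d]
    show ((TensorProduct.lid k (Hc.H β)).toLinearMap ∘ₗ
        TensorProduct.map Hc.ε.toLinearMap LinearMap.id ∘ₗ (Hc.Δ 1 β).toLinearMap) ∘ₗ
        (famCast (k := k) hh ∘ₗ famCast (k := k) (mul_assoc α⁻¹ α β).symm) = _
    rw [Hc.counit_left β, famCast_trans (mul_assoc α⁻¹ α β).symm hh g1,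
      famCast_trans g1 (one_mul β) c6]
  -- now the main computation
  have s1 : TensorProduct.map (Hc.Δ β⁻¹ α⁻¹).toLinearMap
        ((TensorProduct.comm k (Hc.H α⁻¹) (Hc.H β⁻¹)).toLinearMap ∘ₗ
          TensorProduct.map (Hc.S α) (Hc.S β) ∘ₗ (Hc.Δ α β).toLinearMap)
      = TensorProduct.map LinearMap.id
          ((TensorProduct.comm k (Hc.H α⁻¹) (Hc.H β⁻¹)).toLinearMap ∘ₗ
            TensorProduct.map (Hc.S α) (Hc.S β) ∘ₗ (Hc.Δ α β).toLinearMap) ∘ₗ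
          TensorProduct.map (Hc.Δ β⁻¹ α⁻¹).toLinearMap LinearMap.id := by
    rw [← TensorProduct.map_comp, LinearMap.id_comp, LinearMap.comp_id]
  rw [conv, s1]
  show LinearMap.mul' k (Hc.H β⁻¹ ⊗[k] Hc.H α⁻¹) ∘ₗ
      TensorProduct.map LinearMap.id
        ((TensorProduct.comm k (Hc.H α⁻¹) (Hc.H β⁻¹)).toLinearMap ∘ₗ
          TensorProduct.map (Hc.S α) (Hc.S β) ∘ₗ (Hc.Δ α β).toLinearMap) ∘ₗ
      (TensorProduct.map (Hc.Δ β⁻¹ α⁻¹).toLinearMap LinearMap.id ∘ₗ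
        (Hc.Δ (β⁻¹*α⁻¹) (α*β)).toLinearMap) = _
  rw [s2]
  show LinearMap.mul' k (Hc.H β⁻¹ ⊗[k] Hc.H α⁻¹) ∘ₗ
      (TensorProduct.map LinearMap.id
        ((TensorProduct.comm k (Hc.H α⁻¹) (Hc.H β⁻¹)).toLinearMap ∘ₗ
          TensorProduct.map (Hc.S α) (Hc.S β) ∘ₗ (Hc.Δ α β).toLinearMap) ∘ₗ
      (TensorProduct.assoc k (Hc.H β⁻¹) (Hc.H α⁻¹) (Hc.H (α*β))).symm.toLinearMap) ∘ₗ
      TensorProduct.map LinearMap.id (Hc.Δ α⁻¹ (α*β)).toLinearMap ∘ₗ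
      (Hc.Δ β⁻¹ (α⁻¹*(α*β))).toLinearMap ∘ₗ famCast (k := k) (mul_assoc β⁻¹ α⁻¹ (α*β)) = _
  rw [s3]
  show LinearMap.mul' k (Hc.H β⁻¹ ⊗[k] Hc.H α⁻¹) ∘ₗ
      (TensorProduct.assoc k (Hc.H β⁻¹) (Hc.H α⁻¹)
          (Hc.H β⁻¹ ⊗[k] Hc.H α⁻¹)).symm.toLinearMap ∘ₗ
      (TensorProduct.map LinearMap.id (TensorProduct.map LinearMap.id
        ((TensorProduct.comm k (Hc.H α⁻¹) (Hc.H β⁻¹)).toLinearMap ∘ₗ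
          TensorProduct.map (Hc.S α) (Hc.S β) ∘ₗ (Hc.Δ α β).toLinearMap)) ∘ₗ
        TensorProduct.map LinearMap.id (Hc.Δ α⁻¹ (α*β)).toLinearMap) ∘ₗ
      (Hc.Δ β⁻¹ (α⁻¹*(α*β))).toLinearMap ∘ₗ famCast (k := k) (mul_assoc β⁻¹ α⁻¹ (α*β)) = _
  rw [← map_id_comp]
  -- expand the inner composite using the second coassociativity
  have s5a : TensorProduct.map (LinearMap.id : Hc.H α⁻¹ →ₗ[k] Hc.H α⁻¹)
        ((TensorProduct.comm k (Hc.H α⁻¹) (Hc.H β⁻¹)).toLinearMap ∘ₗ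
          TensorProduct.map (Hc.S α) (Hc.S β) ∘ₗ (Hc.Δ α β).toLinearMap)
      = TensorProduct.map LinearMap.id
            (TensorProduct.comm k (Hc.H α⁻¹) (Hc.H β⁻¹)).toLinearMap ∘ₗ
          TensorProduct.map LinearMap.id (TensorProduct.map (Hc.S α) (Hc.S β)) ∘ₗ
          TensorProduct.map LinearMap.id (Hc.Δ α β).toLinearMap := by
    simp only [map_id_comp]
  have s5 : TensorProduct.map (LinearMap.id : Hc.H α⁻¹ →ₗ[k] Hc.H α⁻¹)
        ((TensorProduct.comm k (Hc.H α⁻¹) (Hc.H β⁻¹)).toLinearMap ∘ₗ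
          TensorProduct.map (Hc.S α) (Hc.S β) ∘ₗ (Hc.Δ α β).toLinearMap) ∘ₗ
        (Hc.Δ α⁻¹ (α*β)).toLinearMap
      = TensorProduct.map LinearMap.id
            (TensorProduct.comm k (Hc.H α⁻¹) (Hc.H β⁻¹)).toLinearMap ∘ₗ
          TensorProduct.map LinearMap.id (TensorProduct.map (Hc.S α) (Hc.S β)) ∘ₗ
          (TensorProduct.assoc k (Hc.H α⁻¹) (Hc.H α) (Hc.H β)).toLinearMap ∘ₗ
          TensorProduct.map (Hc.Δ α⁻¹ α).toLinearMap LinearMap.id ∘ₗ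
          (Hc.Δ (α⁻¹*α) β).toLinearMap ∘ₗ famCast (k := k) (mul_assoc α⁻¹ α β).symm := by
    rw [s5a]
    show (TensorProduct.map LinearMap.id
            (TensorProduct.comm k (Hc.H α⁻¹) (Hc.H β⁻¹)).toLinearMap ∘ₗ
          TensorProduct.map LinearMap.id (TensorProduct.map (Hc.S α) (Hc.S β))) ∘ₗ
        (TensorProduct.map LinearMap.id (Hc.Δ α β).toLinearMap ∘ₗ
          (Hc.Δ α⁻¹ (α*β)).toLinearMap) = _
    rw [s5b]
    simp only [LinearMap.comp_assoc]
  rw [s5]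
  simp only [map_id_comp]
  show (LinearMap.mul' k (Hc.H β⁻¹ ⊗[k] Hc.H α⁻¹) ∘ₗ
      (TensorProduct.assoc k (Hc.H β⁻¹) (Hc.H α⁻¹)
        (Hc.H β⁻¹ ⊗[k] Hc.H α⁻¹)).symm.toLinearMap ∘ₗ
      TensorProduct.map LinearMap.id (TensorProduct.map LinearMap.id
        (TensorProduct.comm k (Hc.H α⁻¹) (Hc.H β⁻¹)).toLinearMap) ∘ₗ
      TensorProduct.map LinearMap.id (TensorProduct.map LinearMap.id
        (TensorProduct.map (Hc.S α) (Hc.S β))) ∘ₗ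
      TensorProduct.map LinearMap.id
        (TensorProduct.assoc k (Hc.H α⁻¹) (Hc.H α) (Hc.H β)).toLinearMap) ∘ₗ
      TensorProduct.map LinearMap.id
        (TensorProduct.map (Hc.Δ α⁻¹ α).toLinearMap LinearMap.id) ∘ₗ
      TensorProduct.map LinearMap.id (Hc.Δ (α⁻¹*α) β).toLinearMap ∘ₗ
      TensorProduct.map LinearMap.id (famCast (k := k) (mul_assoc α⁻¹ α β).symm) ∘ₗ
      (Hc.Δ β⁻¹ (α⁻¹*(α*β))).toLinearMap ∘ₗ famCast (k := k) (mul_assoc β⁻¹ α⁻¹ (α*β)) = _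
  rw [claimA]
  show TensorProduct.map
        (LinearMap.mul' k (Hc.H β⁻¹) ∘ₗ TensorProduct.map LinearMap.id (Hc.S β))
        (LinearMap.mul' k (Hc.H α⁻¹) ∘ₗ TensorProduct.map LinearMap.id (Hc.S α)) ∘ₗ
      ((TensorProduct.assoc k (Hc.H β⁻¹) (Hc.H β)
          (Hc.H α⁻¹ ⊗[k] Hc.H α)).symm.toLinearMap ∘ₗ
        TensorProduct.map LinearMap.id
          (TensorProduct.comm k (Hc.H α⁻¹ ⊗[k] Hc.H α) (Hc.H β)).toLinearMap ∘ₗ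
        TensorProduct.map LinearMap.id
          (TensorProduct.map (Hc.Δ α⁻¹ α).toLinearMap LinearMap.id)) ∘ₗ
      TensorProduct.map LinearMap.id (Hc.Δ (α⁻¹*α) β).toLinearMap ∘ₗ
      TensorProduct.map LinearMap.id (famCast (k := k) (mul_assoc α⁻¹ α β).symm) ∘ₗ
      (Hc.Δ β⁻¹ (α⁻¹*(α*β))).toLinearMap ∘ₗ famCast (k := k) (mul_assoc β⁻¹ α⁻¹ (α*β)) = _
  rw [s7]
  show (TensorProduct.map
        (LinearMap.mul' k (Hc.H β⁻¹) ∘ₗ TensorProduct.map LinearMap.id (Hc.S β))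
        (LinearMap.mul' k (Hc.H α⁻¹) ∘ₗ TensorProduct.map LinearMap.id (Hc.S α)) ∘ₗ
      TensorProduct.map LinearMap.id (Hc.Δ α⁻¹ α).toLinearMap) ∘ₗ
      (TensorProduct.assoc k (Hc.H β⁻¹) (Hc.H β) (Hc.H (α⁻¹*α))).symm.toLinearMap ∘ₗ
      TensorProduct.map LinearMap.id
        (TensorProduct.comm k (Hc.H (α⁻¹*α)) (Hc.H β)).toLinearMap ∘ₗ
      TensorProduct.map LinearMap.id (Hc.Δ (α⁻¹*α) β).toLinearMap ∘ₗ
      TensorProduct.map LinearMap.id (famCast (k := k) (mul_assoc α⁻¹ α β).symm) ∘ₗ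
      (Hc.Δ β⁻¹ (α⁻¹*(α*β))).toLinearMap ∘ₗ famCast (k := k) (mul_assoc β⁻¹ α⁻¹ (α*β)) = _
  have s8 : TensorProduct.map
        (LinearMap.mul' k (Hc.H β⁻¹) ∘ₗ TensorProduct.map LinearMap.id (Hc.S β))
        (LinearMap.mul' k (Hc.H α⁻¹) ∘ₗ TensorProduct.map LinearMap.id (Hc.S α)) ∘ₗ
        TensorProduct.map LinearMap.id (Hc.Δ α⁻¹ α).toLinearMap
      = TensorProduct.map
          (LinearMap.mul' k (Hc.H β⁻¹) ∘ₗ TensorProduct.map LinearMap.id (Hc.S β))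
          ((LinearMap.mul' k (Hc.H α⁻¹) ∘ₗ TensorProduct.map LinearMap.id (Hc.S α)) ∘ₗ
            (Hc.Δ α⁻¹ α).toLinearMap) := by
    rw [← TensorProduct.map_comp, LinearMap.comp_id]
  rw [s8, s9]
  simp only [LinearMap.comp_assoc]
  show TensorProduct.map
        (LinearMap.mul' k (Hc.H β⁻¹) ∘ₗ TensorProduct.map LinearMap.id (Hc.S β))
        (Algebra.linearMap k (Hc.H α⁻¹) ∘ₗ Hc.ε.toLinearMap ∘ₗ
          famCast (k := k) (inv_mul_cancel α)) ∘ₗ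
      (TensorProduct.assoc k (Hc.H β⁻¹) (Hc.H β) (Hc.H (α⁻¹*α))).symm.toLinearMap ∘ₗ
      TensorProduct.map LinearMap.id
        (TensorProduct.comm k (Hc.H (α⁻¹*α)) (Hc.H β)).toLinearMap ∘ₗ
      TensorProduct.map LinearMap.id (Hc.Δ (α⁻¹*α) β).toLinearMap ∘ₗ
      TensorProduct.map LinearMap.id (famCast (k := k) (mul_assoc α⁻¹ α β).symm) ∘ₗ
      (Hc.Δ β⁻¹ (α⁻¹*(α*β))).toLinearMap ∘ₗ famCast (k := k) (mul_assoc β⁻¹ α⁻¹ (α*β)) = _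
  -- regroup so that s10 applies
  show (TensorProduct.map
        (LinearMap.mul' k (Hc.H β⁻¹) ∘ₗ TensorProduct.map LinearMap.id (Hc.S β))
        (Algebra.linearMap k (Hc.H α⁻¹) ∘ₗ Hc.ε.toLinearMap ∘ₗ
          famCast (k := k) (inv_mul_cancel α)) ∘ₗ
      (TensorProduct.assoc k (Hc.H β⁻¹) (Hc.H β) (Hc.H (α⁻¹*α))).symm.toLinearMap ∘ₗ
      TensorProduct.map LinearMap.id
        (TensorProduct.comm k (Hc.H (α⁻¹*α)) (Hc.H β)).toLinearMap) ∘ₗ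
      TensorProduct.map LinearMap.id (Hc.Δ (α⁻¹*α) β).toLinearMap ∘ₗ
      TensorProduct.map LinearMap.id (famCast (k := k) (mul_assoc α⁻¹ α β).symm) ∘ₗ
      (Hc.Δ β⁻¹ (α⁻¹*(α*β))).toLinearMap ∘ₗ famCast (k := k) (mul_assoc β⁻¹ α⁻¹ (α*β)) = _
  rw [s10]
  show (TensorProduct.mk k (Hc.H β⁻¹) (Hc.H α⁻¹)).flip 1 ∘ₗ
      (LinearMap.mul' k (Hc.H β⁻¹) ∘ₗ TensorProduct.map LinearMap.id (Hc.S β)) ∘ₗ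
      ((TensorProduct.map LinearMap.id ((TensorProduct.lid k (Hc.H β)).toLinearMap ∘ₗ
          TensorProduct.map (Hc.ε.toLinearMap ∘ₗ famCast (k := k) (inv_mul_cancel α))
            LinearMap.id) ∘ₗ
        TensorProduct.map LinearMap.id (Hc.Δ (α⁻¹*α) β).toLinearMap) ∘ₗ
        TensorProduct.map LinearMap.id (famCast (k := k) (mul_assoc α⁻¹ α β).symm)) ∘ₗ
      (Hc.Δ β⁻¹ (α⁻¹*(α*β))).toLinearMap ∘ₗ famCast (k := k) (mul_assoc β⁻¹ α⁻¹ (α*β)) = _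
  rw [← map_id_comp, ← map_id_comp]
  simp only [LinearMap.comp_assoc]
  rw [s11]
  show (TensorProduct.mk k (Hc.H β⁻¹) (Hc.H α⁻¹)).flip 1 ∘ₗ
      (LinearMap.mul' k (Hc.H β⁻¹) ∘ₗ TensorProduct.map LinearMap.id (Hc.S β)) ∘ₗ
      (TensorProduct.map LinearMap.id (famCast (k := k) c6) ∘ₗ
        (Hc.Δ β⁻¹ (α⁻¹*(α*β))).toLinearMap) ∘ₗ
      famCast (k := k) (mul_assoc β⁻¹ α⁻¹ (α*β)) = _
  have s12 : TensorProduct.map (LinearMap.id : Hc.H β⁻¹ →ₗ[k] Hc.H β⁻¹)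
        (famCast (k := k) c6) ∘ₗ (Hc.Δ β⁻¹ (α⁻¹*(α*β))).toLinearMap
      = (Hc.Δ β⁻¹ β).toLinearMap ∘ₗ famCast (k := k) c7 := by
    rw [Δ_comp_famCast Hc rfl c6 c7]; simp
  rw [s12]
  show (TensorProduct.mk k (Hc.H β⁻¹) (Hc.H α⁻¹)).flip 1 ∘ₗ
      ((LinearMap.mul' k (Hc.H β⁻¹) ∘ₗ TensorProduct.map LinearMap.id (Hc.S β)) ∘ₗ
        (Hc.Δ β⁻¹ β).toLinearMap) ∘ₗ
      famCast (k := k) c7 ∘ₗ famCast (k := k) (mul_assoc β⁻¹ α⁻¹ (α*β)) = _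
  rw [s13, famCast_trans (mul_assoc β⁻¹ α⁻¹ (α*β)) c7 c17]
  show ((TensorProduct.mk k (Hc.H β⁻¹) (Hc.H α⁻¹)).flip 1 ∘ₗ
      Algebra.linearMap k (Hc.H β⁻¹)) ∘ₗ Hc.ε.toLinearMap ∘ₗ
      (famCast (k := k) (inv_mul_cancel β) ∘ₗ famCast (k := k) c17) = _
  rw [s14, famCast_trans c17 (inv_mul_cancel β) h2]
  rfl

lemma eps_comp_unit : Hc.ε.toLinearMap ∘ₗ Algebra.linearMap k (Hc.H 1) = LinearMap.id := by
  apply LinearMap.ext; intro c; simp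

lemma uB_k : uB Hc k = Hc.ε.toLinearMap := by
  apply LinearMap.ext; intro x; simp [uB]

end Aux

open Aux in
/-- The antipode of a Hopf `G`-coalgebra is an anti-coalgebra map. -/
theorem antipode_anticoalgebra {k G : Type*} [Field k] [CommGroup G]
    (Hc : HopfGCoalgebra k G) :
    (∀ α β : G,
      (Hc.Δ β⁻¹ α⁻¹).toLinearMap ∘ₗ famCast (k := k) (mul_inv_rev α β) ∘ₗ Hc.S (α * β)
        = (TensorProduct.comm k (Hc.H α⁻¹) (Hc.H β⁻¹)).toLinearMap ∘ₗ
            TensorProduct.map (Hc.S α) (Hc.S β) ∘ₗ (Hc.Δ α β).toLinearMap) ∧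
      Hc.ε.toLinearMap ∘ₗ famCast (k := k) inv_one ∘ₗ Hc.S 1 = Hc.ε.toLinearMap := by
  constructor
  · intro α β
    have h1 : (α*β)*(β⁻¹*α⁻¹) = 1 := by group
    have h2 : (β⁻¹*α⁻¹)*(α*β) = 1 := by group
    have e1' : ((α*β)*(β⁻¹*α⁻¹))*(α*β) = 1*(α*β) := by rw [h1]
    have eL : ((α*β)*(β⁻¹*α⁻¹))*(α*β) = α*β := by rw [h1, one_mul]
    have e2' : (α*β)*((β⁻¹*α⁻¹)*(α*β)) = (α*β)*1 := by rw [h2]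
    have eM : ((α*β)*(β⁻¹*α⁻¹))*(α*β) = (α*β)*1 := by rw [h1, one_mul, mul_one]
    have keyL : conv Hc
          (conv Hc ((Hc.Δ β⁻¹ α⁻¹).toLinearMap ∘ₗ famCast (k := k) (mul_inv_rev α β) ∘ₗ
              Hc.S (α * β))
            (Hc.Δ β⁻¹ α⁻¹).toLinearMap)
          ((TensorProduct.comm k (Hc.H α⁻¹) (Hc.H β⁻¹)).toLinearMap ∘ₗ
            TensorProduct.map (Hc.S α) (Hc.S β) ∘ₗ (Hc.Δ α β).toLinearMap)
        = ((TensorProduct.comm k (Hc.H α⁻¹) (Hc.H β⁻¹)).toLinearMap ∘ₗ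
            TensorProduct.map (Hc.S α) (Hc.S β) ∘ₗ (Hc.Δ α β).toLinearMap) ∘ₗ
            famCast (k := k) eL := by
      rw [conv_PR Hc α β h1, conv_cast_left Hc h1 e1', conv_unit_left]
      show ((TensorProduct.comm k (Hc.H α⁻¹) (Hc.H β⁻¹)).toLinearMap ∘ₗ
          TensorProduct.map (Hc.S α) (Hc.S β) ∘ₗ (Hc.Δ α β).toLinearMap) ∘ₗ
          (famCast (k := k) (one_mul (α*β)) ∘ₗ famCast (k := k) e1') = _
      rw [famCast_trans e1' (one_mul (α*β)) eL]
    have keyR : conv Hc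
          ((Hc.Δ β⁻¹ α⁻¹).toLinearMap ∘ₗ famCast (k := k) (mul_inv_rev α β) ∘ₗ
            Hc.S (α * β))
          (conv Hc (Hc.Δ β⁻¹ α⁻¹).toLinearMap
            ((TensorProduct.comm k (Hc.H α⁻¹) (Hc.H β⁻¹)).toLinearMap ∘ₗ
              TensorProduct.map (Hc.S α) (Hc.S β) ∘ₗ (Hc.Δ α β).toLinearMap)) ∘ₗ
          famCast (k := k) (mul_assoc (α*β) (β⁻¹*α⁻¹) (α*β))
        = ((Hc.Δ β⁻¹ α⁻¹).toLinearMap ∘ₗ famCast (k := k) (mul_inv_rev α β) ∘ₗ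
            Hc.S (α * β)) ∘ₗ famCast (k := k) eL := by
      rw [conv_RQ Hc α β h2, conv_cast_right Hc h2 e2', conv_unit_right]
      show ((Hc.Δ β⁻¹ α⁻¹).toLinearMap ∘ₗ famCast (k := k) (mul_inv_rev α β) ∘ₗ
          Hc.S (α * β)) ∘ₗ
          (famCast (k := k) (mul_one (α*β)) ∘ₗ (famCast (k := k) e2' ∘ₗ
            famCast (k := k) (mul_assoc (α*β) (β⁻¹*α⁻¹) (α*β)))) = _
      rw [famCast_trans (mul_assoc (α*β) (β⁻¹*α⁻¹) (α*β)) e2' eM,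
        famCast_trans eM (mul_one (α*β)) eL]
    have main := (keyL.symm.trans (conv_assoc Hc _ _ _)).trans keyR
    exact (comp_famCast_cancel eL main).symm
  · have ic1 : (1 : G)⁻¹ * 1 = 1 := inv_mul_cancel 1
    have pr1 : (1 : G)⁻¹ * 1 = 1 * 1 := by rw [ic1, one_mul]
    have A : ((LinearMap.mul' k (Hc.H (1:G)⁻¹) ∘ₗ
          TensorProduct.map LinearMap.id (Hc.S 1)) ∘ₗ (Hc.Δ (1:G)⁻¹ 1).toLinearMap) ∘ₗ
          famCast (k := k) (inv_mul_cancel (1:G)).symm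
        = Algebra.linearMap k (Hc.H (1:G)⁻¹) ∘ₗ Hc.ε.toLinearMap := Hc.antipode_right 1
    rw [comp_famCast_symm_eq (inv_mul_cancel (1:G))] at A
    -- f is multiplicative
    have fm : (Hc.ε.toLinearMap ∘ₗ famCast (k := k) (inv_one (G := G))) ∘ₗ
          LinearMap.mul' k (Hc.H (1:G)⁻¹)
        = LinearMap.mul' k k ∘ₗ
            TensorProduct.map (Hc.ε.toLinearMap ∘ₗ famCast (k := k) (inv_one (G := G)))
              (Hc.ε.toLinearMap ∘ₗ famCast (k := k) (inv_one (G := G))) := by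
      show Hc.ε.toLinearMap ∘ₗ (famCast (k := k) (inv_one (G := G)) ∘ₗ
        LinearMap.mul' k (Hc.H (1:G)⁻¹)) = _
      rw [famCast_comp_mul' Hc (inv_one (G := G))]
      show (Hc.ε.toLinearMap ∘ₗ LinearMap.mul' k (Hc.H 1)) ∘ₗ _ = _
      rw [algHom_comp_mul' Hc.ε]
      show LinearMap.mul' k k ∘ₗ (TensorProduct.map Hc.ε.toLinearMap Hc.ε.toLinearMap ∘ₗ
        TensorProduct.map (famCast (k := k) (inv_one (G := G)))
          (famCast (k := k) (inv_one (G := G)))) = _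
      rw [← TensorProduct.map_comp]
    have C1 : conv Hc (Hc.ε.toLinearMap ∘ₗ famCast (k := k) (inv_one (G := G)))
          (Hc.ε.toLinearMap ∘ₗ famCast (k := k) (inv_one (G := G)) ∘ₗ Hc.S 1)
        = Hc.ε.toLinearMap ∘ₗ famCast (k := k) ic1 := by
      have sp : TensorProduct.map
            (Hc.ε.toLinearMap ∘ₗ famCast (k := k) (inv_one (G := G)))
            (Hc.ε.toLinearMap ∘ₗ famCast (k := k) (inv_one (G := G)) ∘ₗ Hc.S 1)
          = TensorProduct.map
              (Hc.ε.toLinearMap ∘ₗ famCast (k := k) (inv_one (G := G)))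
              (Hc.ε.toLinearMap ∘ₗ famCast (k := k) (inv_one (G := G))) ∘ₗ
            TensorProduct.map LinearMap.id (Hc.S 1) := by
        rw [← TensorProduct.map_comp, LinearMap.comp_id]
        rfl
      rw [conv, sp]
      show (LinearMap.mul' k k ∘ₗ TensorProduct.map
            (Hc.ε.toLinearMap ∘ₗ famCast (k := k) (inv_one (G := G)))
            (Hc.ε.toLinearMap ∘ₗ famCast (k := k) (inv_one (G := G)))) ∘ₗ
          (TensorProduct.map LinearMap.id (Hc.S 1) ∘ₗ (Hc.Δ (1:G)⁻¹ 1).toLinearMap) = _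
      rw [← fm]
      show (Hc.ε.toLinearMap ∘ₗ famCast (k := k) (inv_one (G := G))) ∘ₗ
          ((LinearMap.mul' k (Hc.H (1:G)⁻¹) ∘ₗ TensorProduct.map LinearMap.id (Hc.S 1)) ∘ₗ
            (Hc.Δ (1:G)⁻¹ 1).toLinearMap) = _
      rw [A]
      show ((Hc.ε.toLinearMap ∘ₗ (famCast (k := k) (inv_one (G := G)) ∘ₗ
          Algebra.linearMap k (Hc.H (1:G)⁻¹))) ∘ₗ Hc.ε.toLinearMap) ∘ₗ
          famCast (k := k) (inv_mul_cancel (1:G)) = _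
      rw [famCast_comp_algebraMap Hc (inv_one (G := G)), eps_comp_unit]
      rfl
    have C2 : conv Hc (Hc.ε.toLinearMap ∘ₗ famCast (k := k) (inv_one (G := G)))
          (Hc.ε.toLinearMap ∘ₗ famCast (k := k) (inv_one (G := G)) ∘ₗ Hc.S 1)
        = (Hc.ε.toLinearMap ∘ₗ famCast (k := k) (inv_one (G := G)) ∘ₗ Hc.S 1) ∘ₗ
            famCast (k := k) ic1 := by
      rw [conv_cast_left Hc (inv_one (G := G)) pr1, ← uB_k Hc, conv_unit_left]
      show (uB Hc k ∘ₗ famCast (k := k) (inv_one (G := G)) ∘ₗ Hc.S 1) ∘ₗ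
          (famCast (k := k) (one_mul (1:G)) ∘ₗ famCast (k := k) pr1) = _
      rw [famCast_trans pr1 (one_mul (1:G)) ic1]
    exact comp_famCast_cancel ic1 (C2.symm.trans C1)
end
end

section
/- Let H be a Hopf G-coalgebra and M = {M_α} a right H-comodule. The family of coinvariants M^{coH} = {M_α^{coH}}, where M_α^{coH} is the image of the projection onto M_α of the set {m = (m_α) ∈ ∏_α M_α : ρ_{α,β}(m_{αβ}) = m_α ⊗ 1_β for all α, β ∈ G}, is a right H-subcomodule of M. -/
open TensorProduct

noncomputable section

variable {k G : Type*} [Field k] [CommGroup G]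

/-- A right comodule over a Hopf `G`-coalgebra. -/
structure GComodule (Hc : HopfGCoalgebra k G) where
  M : G → Type*
  [acg : ∀ α, AddCommGroup (M α)]
  [mod : ∀ α, Module k (M α)]
  ρ : ∀ α β : G, M (α * β) →ₗ[k] M α ⊗[k] Hc.H β
  coassoc : ∀ α β γ : G,
    (TensorProduct.assoc k (M α) (Hc.H β) (Hc.H γ)).toLinearMap ∘ₗ
      TensorProduct.map (ρ α β) LinearMap.id ∘ₗ ρ (α * β) γ
    = TensorProduct.map LinearMap.id (Hc.Δ β γ).toLinearMap ∘ₗ ρ α (β * γ) ∘ₗ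
        famCast (k := k) (mul_assoc α β γ)
  counit : ∀ α : G,
    (TensorProduct.rid k (M α)).toLinearMap ∘ₗ
      TensorProduct.map LinearMap.id Hc.ε.toLinearMap ∘ₗ ρ α 1
    = famCast (k := k) (mul_one α)

attribute [instance] GComodule.acg GComodule.mod

/-- A family `m = (m_α)` is coinvariant if `ρ_{α,β}(m_{αβ}) = m_α ⊗ 1` for all `α β`. -/
def GComodule.IsCoinv {Hc : HopfGCoalgebra k G} (Mc : GComodule Hc)
    (m : ∀ γ : G, Mc.M γ) : Prop :=
  ∀ γ β : G, Mc.ρ γ β (m (γ * β)) = m γ ⊗ₜ[k] (1 : Hc.H β)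

/-- The space of coinvariants `M^{coH}_α`: the image in `M_α` of the projection of the
set of coinvariant families. -/
def GComodule.coinv {Hc : HopfGCoalgebra k G} (Mc : GComodule Hc) (α : G) :
    Submodule k (Mc.M α) where
  carrier := {x | ∃ m : ∀ γ : G, Mc.M γ, Mc.IsCoinv m ∧ m α = x}
  zero_mem' := ⟨0, fun γ β => by
    show Mc.ρ γ β 0 = (0 : Mc.M γ) ⊗ₜ[k] (1 : Hc.H β)
    rw [map_zero, TensorProduct.zero_tmul], rfl⟩
  add_mem' := by
    rintro x y ⟨m, hm, rfl⟩ ⟨n, hn, rfl⟩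
    exact ⟨m + n, fun γ β => by
      simp [GComodule.IsCoinv, hm γ β, hn γ β, TensorProduct.add_tmul], rfl⟩
  smul_mem' := by
    rintro c x ⟨m, hm, rfl⟩
    exact ⟨c • m, fun γ β => by
      simp [GComodule.IsCoinv, hm γ β, TensorProduct.smul_tmul'], rfl⟩

/-- The coinvariants `M^{coH}` form a right `H`-subcomodule of `M`. -/
theorem coinv_subcomodule {Hc : HopfGCoalgebra k G} (Mc : GComodule Hc) :
    ∀ (α β : G) (x : Mc.M (α * β)), x ∈ Mc.coinv (α * β) →
      Mc.ρ α β x ∈ LinearMap.range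
        (TensorProduct.map (Mc.coinv α).subtype (LinearMap.id : Hc.H β →ₗ[k] Hc.H β)) := by
  rintro α β x ⟨m, hm, rfl⟩
  exact ⟨(⟨m α, m, hm, rfl⟩ : Mc.coinv α) ⊗ₜ[k] (1 : Hc.H β), by
    simp [hm α β]⟩
end
end

section
/- Let H be a Hopf G-coalgebra with bijective antipode, A a right H-comodule Poisson algebra, and M a Poisson (A,H)-Hopf module. Then the family M^A = {M_α^{A_α}}, where M_α^{A_α} = {m ∈ M_α : a ⋄ m = 0 for all a ∈ A_α}, is an H-subcomodule of M. -/
open TensorProduct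

noncomputable section

section GenericAux

variable {k₀ : Type*} [CommSemiring k₀] {G₀ : Type*} {F₀ : G₀ → Type*}
    [∀ α, AddCommMonoid (F₀ α)] [∀ α, Module k₀ (F₀ α)]

@[simp] theorem famCast_self {x : G₀} (h : x = x) :
    famCast (k := k₀) (H := F₀) h = LinearMap.id := rfl

@[simp] theorem famCast_famCast_apply {x y z : G₀} (h1 : x = y) (h2 : y = z) (m : F₀ x) :
    famCast (k := k₀) (H := F₀) h2 (famCast (k := k₀) (H := F₀) h1 m)
      = famCast (k := k₀) (H := F₀) (h1.trans h2) m := by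
  subst h1; subst h2; rfl

theorem map_map_left {M₁ M₂ M₃ N : Type*} [AddCommMonoid M₁] [AddCommMonoid M₂]
    [AddCommMonoid M₃] [AddCommMonoid N] [Module k₀ M₁] [Module k₀ M₂] [Module k₀ M₃]
    [Module k₀ N] (f : M₂ →ₗ[k₀] M₃) (g : M₁ →ₗ[k₀] M₂) (z : TensorProduct k₀ M₁ N) :
    TensorProduct.map f LinearMap.id (TensorProduct.map g LinearMap.id z)
      = TensorProduct.map (f ∘ₗ g) LinearMap.id z := by
  rw [← LinearMap.comp_apply, ← TensorProduct.map_comp, LinearMap.id_comp]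

theorem map_map_right {M N₁ N₂ N₃ : Type*} [AddCommMonoid M] [AddCommMonoid N₁]
    [AddCommMonoid N₂] [AddCommMonoid N₃] [Module k₀ M] [Module k₀ N₁] [Module k₀ N₂]
    [Module k₀ N₃] (f : N₂ →ₗ[k₀] N₃) (g : N₁ →ₗ[k₀] N₂) (z : TensorProduct k₀ M N₁) :
    TensorProduct.map LinearMap.id f (TensorProduct.map LinearMap.id g z)
      = TensorProduct.map LinearMap.id (f ∘ₗ g) z := by
  rw [← LinearMap.comp_apply, ← TensorProduct.map_comp, LinearMap.id_comp]

/-- The rotation map `X ⊗ (Y ⊗ Z) → Y ⊗ (X ⊗ Z)`. -/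
def rotL (k₀ : Type*) [CommSemiring k₀] (X Y Z : Type*) [AddCommMonoid X] [AddCommMonoid Y]
    [AddCommMonoid Z] [Module k₀ X] [Module k₀ Y] [Module k₀ Z] :
    TensorProduct k₀ X (TensorProduct k₀ Y Z) →ₗ[k₀] TensorProduct k₀ Y (TensorProduct k₀ X Z) :=
  (TensorProduct.assoc k₀ Y X Z).toLinearMap ∘ₗ
    TensorProduct.map (TensorProduct.comm k₀ X Y).toLinearMap LinearMap.id ∘ₗ
    (TensorProduct.assoc k₀ X Y Z).symm.toLinearMap

@[simp] theorem rotL_tmul {X Y Z : Type*} [AddCommMonoid X] [AddCommMonoid Y]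
    [AddCommMonoid Z] [Module k₀ X] [Module k₀ Y] [Module k₀ Z] (x : X) (y : Y) (z : Z) :
    rotL k₀ X Y Z (x ⊗ₜ[k₀] (y ⊗ₜ[k₀] z)) = y ⊗ₜ[k₀] (x ⊗ₜ[k₀] z) := by
  simp [rotL]

end GenericAux

section LemX

variable {k₁ : Type*} [Field k₁]

theorem mem_range_map_subtype {ι' M H' : Type*} [AddCommGroup M] [Module k₁ M]
    [AddCommGroup H'] [Module k₁ H']
    (N : Submodule k₁ M) (f : ι' → (M →ₗ[k₁] M))
    (hN : ∀ m, (∀ i, f i m = 0) → m ∈ N) (t : TensorProduct k₁ M H')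
    (ht : ∀ i, LinearMap.rTensor H' (f i) t = 0) :
    t ∈ LinearMap.range (TensorProduct.map N.subtype (LinearMap.id : H' →ₗ[k₁] H')) := by
  classical
  set b := Module.Basis.ofVectorSpace k₁ H' with hb
  set ι := Module.Basis.ofVectorSpaceIndex k₁ H'
  let e : TensorProduct k₁ M H' ≃ₗ[k₁] (ι →₀ M) :=
    (TensorProduct.congr (LinearEquiv.refl k₁ M) b.repr).trans
      (TensorProduct.finsuppScalarRight k₁ k₁ M ι)
  have e_tmul : ∀ (v : M) (h : H') (i : ι),
      e (v ⊗ₜ[k₁] h) i = b.repr h i • v := by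
    intro v h i
    simp [e]
  have nat : ∀ (g : M →ₗ[k₁] M) (u : TensorProduct k₁ M H') (i : ι),
      e (LinearMap.rTensor H' g u) i = g (e u i) := by
    intro g u i
    induction u using TensorProduct.induction_on with
    | zero => simp
    | tmul m h => simp [e_tmul, map_smul]
    | add u v hu hv => simp [map_add, hu, hv]
  have hmem : ∀ i : ι, e t i ∈ N := by
    intro i
    refine hN _ fun j => ?_
    have := nat (f j) t i
    rw [ht j] at this
    simpa using this.symm
  have symm_eq : ∀ F : ι →₀ M, e.symm F = F.sum fun i m => m ⊗ₜ[k₁] (b i) := by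
    intro F
    induction F using Finsupp.induction_linear with
    | zero => simp
    | add F1 F2 h1 h2 =>
        rw [map_add, h1, h2, Finsupp.sum_add_index]
        · intro i _; simp
        · intro i _ m1 m2; simp [add_tmul]
    | single i m =>
        rw [Finsupp.sum_single_index (by simp)]
        simp only [e, LinearEquiv.trans_symm, LinearEquiv.trans_apply,
          TensorProduct.finsuppScalarRight_symm_apply_single]
        simp [TensorProduct.congr]
  have ht' : t = (e t).sum fun i m => m ⊗ₜ[k₁] (b i) := by
    conv_lhs => rw [← e.symm_apply_apply t]
    rw [symm_eq]
  rw [ht']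
  refine Submodule.sum_mem _ fun i _ => ?_
  exact ⟨⟨e t i, hmem i⟩ ⊗ₜ[k₁] (b i), by simp⟩

end LemX


variable {k G : Type*} [Field k] [CommGroup G]

/-- A family of Poisson algebras which is a right `H`-comodule Poisson algebra. -/
structure GComodulePoissonAlgebra (Hc : HopfGCoalgebra k G) where
  A : G → Type*
  [cring : ∀ α, CommRing (A α)]
  [alg : ∀ α, Algebra k (A α)]
  pb : ∀ α : G, A α →ₗ[k] A α →ₗ[k] A α
  pb_skew : ∀ (α : G) (a b : A α), pb α a b = - pb α b a
  pb_jacobi : ∀ (α : G) (a b c : A α),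
    pb α a (pb α b c) = pb α (pb α a b) c + pb α b (pb α a c)
  pb_leibniz : ∀ (α : G) (a b c : A α), pb α a (b * c) = pb α a b * c + b * pb α a c
  ρ : ∀ α β : G, A (α * β) →ₐ[k] A α ⊗[k] Hc.H β
  coassoc : ∀ α β γ : G,
    (TensorProduct.assoc k (A α) (Hc.H β) (Hc.H γ)).toLinearMap ∘ₗ
      TensorProduct.map (ρ α β).toLinearMap LinearMap.id ∘ₗ (ρ (α * β) γ).toLinearMap
    = TensorProduct.map LinearMap.id (Hc.Δ β γ).toLinearMap ∘ₗ (ρ α (β * γ)).toLinearMap ∘ₗ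
        famCast (k := k) (mul_assoc α β γ)
  counit : ∀ α : G,
    (TensorProduct.rid k (A α)).toLinearMap ∘ₗ
      TensorProduct.map LinearMap.id Hc.ε.toLinearMap ∘ₗ (ρ α 1).toLinearMap
    = famCast (k := k) (mul_one α)
  pb_comp : ∀ α β : G,
    (ρ α β).toLinearMap ∘ₗ TensorProduct.lift (pb (α * β))
    = TensorProduct.map (TensorProduct.lift (pb α)) (LinearMap.mul' k (Hc.H β)) ∘ₗ
        (TensorProduct.tensorTensorTensorComm k (A α) (Hc.H β) (A α) (Hc.H β)).toLinearMap ∘ₗ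
        TensorProduct.map (ρ α β).toLinearMap (ρ α β).toLinearMap

attribute [instance] GComodulePoissonAlgebra.cring GComodulePoissonAlgebra.alg

/-- A Poisson `(A,H)`-Hopf module. -/
structure PoissonHopfModule {Hc : HopfGCoalgebra k G}
    (Ac : GComodulePoissonAlgebra Hc) where
  M : G → Type*
  [acg : ∀ α, AddCommGroup (M α)]
  [mod : ∀ α, Module k (M α)]
  smul : ∀ α : G, Ac.A α →ₗ[k] M α →ₗ[k] M α
  one_smul : ∀ (α : G) (m : M α), smul α 1 m = m
  mul_smul : ∀ (α : G) (a b : Ac.A α) (m : M α), smul α (a * b) m = smul α a (smul α b m)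
  dia : ∀ α : G, Ac.A α →ₗ[k] M α →ₗ[k] M α
  dia_lie : ∀ (α : G) (a b : Ac.A α) (m : M α),
    dia α (Ac.pb α a b) m = dia α a (dia α b m) - dia α b (dia α a m)
  poisson1 : ∀ (α : G) (a b : Ac.A α) (m : M α),
    dia α a (smul α b m) = smul α (Ac.pb α a b) m + smul α b (dia α a m)
  poisson2 : ∀ (α : G) (a b : Ac.A α) (m : M α),
    dia α (a * b) m = smul α a (dia α b m) + smul α b (dia α a m)
  ρ : ∀ α β : G, M (α * β) →ₗ[k] M α ⊗[k] Hc.H β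
  coassoc : ∀ α β γ : G,
    (TensorProduct.assoc k (M α) (Hc.H β) (Hc.H γ)).toLinearMap ∘ₗ
      TensorProduct.map (ρ α β) LinearMap.id ∘ₗ ρ (α * β) γ
    = TensorProduct.map LinearMap.id (Hc.Δ β γ).toLinearMap ∘ₗ ρ α (β * γ) ∘ₗ
        famCast (k := k) (mul_assoc α β γ)
  counit : ∀ α : G,
    (TensorProduct.rid k (M α)).toLinearMap ∘ₗ
      TensorProduct.map LinearMap.id Hc.ε.toLinearMap ∘ₗ ρ α 1
    = famCast (k := k) (mul_one α)
  smul_comp : ∀ α β : G,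
    ρ α β ∘ₗ TensorProduct.lift (smul (α * β))
    = TensorProduct.map (TensorProduct.lift (smul α)) (LinearMap.mul' k (Hc.H β)) ∘ₗ
        (TensorProduct.tensorTensorTensorComm k (Ac.A α) (Hc.H β) (M α) (Hc.H β)).toLinearMap ∘ₗ
        TensorProduct.map (Ac.ρ α β).toLinearMap (ρ α β)
  dia_comp : ∀ α β : G,
    ρ α β ∘ₗ TensorProduct.lift (dia (α * β))
    = TensorProduct.map (TensorProduct.lift (dia α)) (LinearMap.mul' k (Hc.H β)) ∘ₗ
        (TensorProduct.tensorTensorTensorComm k (Ac.A α) (Hc.H β) (M α) (Hc.H β)).toLinearMap ∘ₗ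
        TensorProduct.map (Ac.ρ α β).toLinearMap (ρ α β)

attribute [instance] PoissonHopfModule.acg PoissonHopfModule.mod

variable {Hc : HopfGCoalgebra k G} {Ac : GComodulePoissonAlgebra Hc}

/-- A coinvariant family for a Poisson Hopf module. -/
def PoissonHopfModule.IsCoinv (Mc : PoissonHopfModule Ac) (m : ∀ γ : G, Mc.M γ) : Prop :=
  ∀ γ β : G, Mc.ρ γ β (m (γ * β)) = m γ ⊗ₜ[k] (1 : Hc.H β)

/-- A coinvariant family for the comodule algebra `A`. -/
def GComodulePoissonAlgebra.IsCoinv (Ac : GComodulePoissonAlgebra Hc)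
    (a : ∀ γ : G, Ac.A γ) : Prop :=
  ∀ γ β : G, Ac.ρ γ β (a (γ * β)) = a γ ⊗ₜ[k] (1 : Hc.H β)

/-- `M^{A_α}_α`, the space of elements killed by the Lie action. -/
def PoissonHopfModule.diaInv (Mc : PoissonHopfModule Ac) (α : G) :
    Submodule k (Mc.M α) where
  carrier := {m | ∀ a : Ac.A α, Mc.dia α a m = 0}
  zero_mem' := fun a => map_zero _
  add_mem' := fun {x y} hx hy a => by rw [map_add, hx a, hy a, add_zero]
  smul_mem' := fun c x hx a => by rw [map_smul, hx a, smul_zero]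

/-- The Poisson-central part `A^{A_α}_α` of `A_α`. -/
def GComodulePoissonAlgebra.center (Ac : GComodulePoissonAlgebra Hc) (α : G) :
    Submodule k (Ac.A α) where
  carrier := {a | ∀ b : Ac.A α, Ac.pb α a b = 0}
  zero_mem' := fun b => by rw [map_zero]; rfl
  add_mem' := fun {x y} hx hy b => by rw [map_add]; simp [hx b, hy b]
  smul_mem' := fun c x hx b => by rw [map_smul]; simp [hx b]

/-- `M^{coH}_α` for a Poisson Hopf module. -/
def PoissonHopfModule.coinv (Mc : PoissonHopfModule Ac) (α : G) : Set (Mc.M α) :=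
  {x | ∃ m : ∀ γ : G, Mc.M γ, Mc.IsCoinv m ∧ m α = x}

/-- `A^{coH}_α`. -/
def GComodulePoissonAlgebra.coinv (Ac : GComodulePoissonAlgebra Hc) (α : G) :
    Set (Ac.A α) :=
  {x | ∃ a : ∀ γ : G, Ac.A γ, Ac.IsCoinv a ∧ a α = x}

section HopfAux

theorem famCast_mulH {x y : G} (h : x = y) (a b : Hc.H x) :
    famCast (k := k) h (a * b) = famCast (k := k) h a * famCast (k := k) h b := by
  subst h; rfl

theorem famCast_oneH {x y : G} (h : x = y) :
    famCast (k := k) h (1 : Hc.H x) = 1 := by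
  subst h; rfl

theorem Delta_cast_left {γ γ' δ : G} (h : γ = γ') (hh : γ * δ = γ' * δ)
    (z : Hc.H (γ * δ)) :
    (Hc.Δ γ' δ) (famCast (k := k) hh z)
      = TensorProduct.map (famCast (k := k) h) LinearMap.id ((Hc.Δ γ δ) z) := by
  subst h
  simp [TensorProduct.map_id]

theorem Delta_cast_right {γ δ δ' : G} (h : δ = δ') (hh : γ * δ = γ * δ')
    (z : Hc.H (γ * δ)) :
    (Hc.Δ γ δ') (famCast (k := k) hh z)
      = TensorProduct.map LinearMap.id (famCast (k := k) h) ((Hc.Δ γ δ) z) := by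
  subst h
  simp [TensorProduct.map_id]

theorem S_cast_apply {γ γ' : G} (h : γ = γ') (z : Hc.H γ) :
    Hc.S γ' (famCast (k := k) h z) = famCast (k := k) (congrArg Inv.inv h) (Hc.S γ z) := by
  subst h; simp

/-- `Σ S(h₁) h₂ = ε(h) 1` for `Δ_{β,β⁻¹}`. -/
theorem A0 (β : G) :
    LinearMap.mul' k (Hc.H β⁻¹) ∘ₗ
        TensorProduct.map (Hc.S β) LinearMap.id ∘ₗ (Hc.Δ β β⁻¹).toLinearMap
      = Algebra.linearMap k (Hc.H β⁻¹) ∘ₗ Hc.ε.toLinearMap ∘ₗ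
          famCast (k := k) (mul_inv_cancel β) := by
  refine LinearMap.ext fun z => ?_
  have h1 := LinearMap.congr_fun (Hc.antipode_left β⁻¹)
    (famCast (k := k) (mul_inv_cancel β) z)
  simp only [LinearMap.comp_apply, AlgHom.toLinearMap_apply, famCast_famCast_apply] at h1 ⊢
  rw [Delta_cast_left ((inv_inv β).symm) _ z] at h1
  rw [map_map_left] at h1
  have hF : (famCast (k := k) (inv_inv β⁻¹) ∘ₗ Hc.S β⁻¹⁻¹) ∘ₗ
      famCast (k := k) ((inv_inv β).symm) = Hc.S β := by
    refine LinearMap.ext fun y => ?_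
    simp only [LinearMap.comp_apply, S_cast_apply, famCast_famCast_apply]
    exact LinearMap.congr_fun (famCast_self _) _
  rw [hF] at h1
  exact h1

/-- `Σ h₁ S(h₂) = ε(h) 1` for `Δ_{γ⁻¹,γ}`. -/
theorem AR' (γ : G) :
    LinearMap.mul' k (Hc.H γ⁻¹) ∘ₗ
        TensorProduct.map LinearMap.id (Hc.S γ) ∘ₗ (Hc.Δ γ⁻¹ γ).toLinearMap
      = Algebra.linearMap k (Hc.H γ⁻¹) ∘ₗ Hc.ε.toLinearMap ∘ₗ
          famCast (k := k) (inv_mul_cancel γ) := by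
  refine LinearMap.ext fun z => ?_
  have h1 := LinearMap.congr_fun (Hc.antipode_right γ)
    (famCast (k := k) (inv_mul_cancel γ) z)
  simp only [LinearMap.comp_apply, AlgHom.toLinearMap_apply, famCast_famCast_apply] at h1 ⊢
  rw [show famCast (k := k)
      (((inv_mul_cancel γ)).trans (inv_mul_cancel γ).symm) z = z from
    LinearMap.congr_fun (famCast_self _) z] at h1
  exact h1

theorem CL (γ : G) (e2 : γ = (γ * γ⁻¹) * γ) (z : Hc.H γ) :
    (TensorProduct.lid k (Hc.H γ))
      (TensorProduct.map (Hc.ε.toLinearMap ∘ₗ famCast (k := k) (mul_inv_cancel γ))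
        LinearMap.id ((Hc.Δ (γ * γ⁻¹) γ) (famCast (k := k) e2 z))) = z := by
  rw [← map_map_left]
  rw [← Delta_cast_left (mul_inv_cancel γ) (by rw [mul_inv_cancel]) (famCast (k := k) e2 z)]
  have h1 := LinearMap.congr_fun (Hc.counit_left γ)
    (famCast (k := k) (by rw [mul_inv_cancel]) (famCast (k := k) e2 z))
  simp only [LinearMap.comp_apply, AlgHom.toLinearMap_apply, famCast_famCast_apply,
    LinearEquiv.coe_coe] at h1 ⊢
  rw [h1]
  exact LinearMap.congr_fun (famCast_self _) z

theorem CR (γ : G) (e1 : γ = γ * (γ⁻¹ * γ)) (z : Hc.H γ) :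
    (TensorProduct.rid k (Hc.H γ))
      (TensorProduct.map LinearMap.id (Hc.ε.toLinearMap ∘ₗ famCast (k := k) (inv_mul_cancel γ))
        ((Hc.Δ γ (γ⁻¹ * γ)) (famCast (k := k) e1 z))) = z := by
  rw [← map_map_right]
  rw [← Delta_cast_right (inv_mul_cancel γ) (by rw [inv_mul_cancel]) (famCast (k := k) e1 z)]
  have h1 := LinearMap.congr_fun (Hc.counit_right γ)
    (famCast (k := k) (by rw [inv_mul_cancel]) (famCast (k := k) e1 z))
  simp only [LinearMap.comp_apply, AlgHom.toLinearMap_apply, famCast_famCast_apply,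
    LinearEquiv.coe_coe] at h1 ⊢
  rw [h1]
  exact LinearMap.congr_fun (famCast_self _) z

theorem S_one (γ : G) : Hc.S γ (1 : Hc.H γ) = 1 := by
  have h1 := LinearMap.congr_fun (A0 (Hc := Hc) γ) (1 : Hc.H (γ * γ⁻¹))
  simp only [LinearMap.comp_apply, AlgHom.toLinearMap_apply] at h1
  rw [famCast_oneH] at h1
  rw [show (Hc.Δ γ γ⁻¹) 1 = (1 : Hc.H γ) ⊗ₜ[k] (1 : Hc.H γ⁻¹) by
    rw [map_one]; rfl] at h1
  simpa using h1

end HopfAux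


section AntiMult

/-- `p ⊗ c ↦ S p * c`. -/
def gB (γ : G) : (TensorProduct k (Hc.H γ) (Hc.H γ⁻¹)) →ₗ[k] Hc.H γ⁻¹ :=
  LinearMap.mul' k _ ∘ₗ TensorProduct.map (Hc.S γ) LinearMap.id

@[simp] theorem gB_tmul (γ : G) (p : Hc.H γ) (c : Hc.H γ⁻¹) :
    gB γ (p ⊗ₜ[k] c) = Hc.S γ p * c := by simp [gB]

/-- `r ⊗ (d₁ ⊗ d₂) ↦ d₁ * S (r * d₂)`. -/
def gF2 (γ : G) :
    TensorProduct k (Hc.H γ) (TensorProduct k (Hc.H γ⁻¹) (Hc.H γ)) →ₗ[k] Hc.H γ⁻¹ :=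
  LinearMap.mul' k _ ∘ₗ
    TensorProduct.map LinearMap.id (Hc.S γ ∘ₗ LinearMap.mul' k _) ∘ₗ rotL k _ _ _

@[simp] theorem gF2_tmul (γ : G) (r d₂ : Hc.H γ) (d₁ : Hc.H γ⁻¹) :
    gF2 γ (r ⊗ₜ[k] (d₁ ⊗ₜ[k] d₂)) = d₁ * Hc.S γ (r * d₂) := by simp [gF2]

/-- `r ⊗ (q ⊗ w) ↦ S q * gF2 (r ⊗ w)`. -/
def gL7 (γ : G) :
    TensorProduct k (Hc.H γ)
      (TensorProduct k (Hc.H γ) (TensorProduct k (Hc.H γ⁻¹) (Hc.H γ))) →ₗ[k] Hc.H γ⁻¹ :=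
  LinearMap.mul' k _ ∘ₗ TensorProduct.map (Hc.S γ) (gF2 γ) ∘ₗ rotL k _ _ _

@[simp] theorem gL7_tmul (γ : G) (r q : Hc.H γ)
    (w : TensorProduct k (Hc.H γ⁻¹) (Hc.H γ)) :
    gL7 γ (r ⊗ₜ[k] (q ⊗ₜ[k] w)) = Hc.S γ q * gF2 γ (r ⊗ₜ[k] w) := by simp [gL7]

/-- `(c₁ ⊗ c₂) ⊗ (d₁ ⊗ d₂) ↦ (c₁ d₁) * S (c₂ d₂)`. -/
def gQ (γ : G) :
    TensorProduct k (TensorProduct k (Hc.H γ⁻¹) (Hc.H γ))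
      (TensorProduct k (Hc.H γ⁻¹) (Hc.H γ)) →ₗ[k] Hc.H γ⁻¹ :=
  LinearMap.mul' k _ ∘ₗ
    TensorProduct.map (LinearMap.mul' k _) (Hc.S γ ∘ₗ LinearMap.mul' k _) ∘ₗ
    (TensorProduct.tensorTensorTensorComm k _ _ _ _).toLinearMap

@[simp] theorem gQ_tmul (γ : G) (c₁ d₁ : Hc.H γ⁻¹) (c₂ d₂ : Hc.H γ) :
    gQ γ ((c₁ ⊗ₜ[k] c₂) ⊗ₜ[k] (d₁ ⊗ₜ[k] d₂)) = (c₁ * d₁) * Hc.S γ (c₂ * d₂) := by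
  simp [gQ]

/-- `(p ⊗ c) ⊗ (q ⊗ d) ↦ (S q * S p) * P (c d)`. -/
def gLP (γ : G) (P : Hc.H (γ⁻¹ * γ) →ₗ[k] Hc.H γ⁻¹) :
    TensorProduct k (TensorProduct k (Hc.H γ) (Hc.H (γ⁻¹ * γ)))
      (TensorProduct k (Hc.H γ) (Hc.H (γ⁻¹ * γ))) →ₗ[k] Hc.H γ⁻¹ :=
  LinearMap.mul' k _ ∘ₗ
    TensorProduct.map (LinearMap.mul' k _ ∘ₗ TensorProduct.map (Hc.S γ) (Hc.S γ))
      (P ∘ₗ LinearMap.mul' k _) ∘ₗ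
    TensorProduct.map (TensorProduct.comm k _ _).toLinearMap LinearMap.id ∘ₗ
    (TensorProduct.tensorTensorTensorComm k _ _ _ _).toLinearMap

@[simp] theorem gLP_tmul (γ : G) (P : Hc.H (γ⁻¹ * γ) →ₗ[k] Hc.H γ⁻¹)
    (p q : Hc.H γ) (c d : Hc.H (γ⁻¹ * γ)) :
    gLP γ P ((p ⊗ₜ[k] c) ⊗ₜ[k] (q ⊗ₜ[k] d))
      = (Hc.S γ q * Hc.S γ p) * P (c * d) := by
  simp [gLP]

/-- `(p ⊗ X) ⊗ (q ⊗ Y) ↦ (S q * S p) * gQ (X ⊗ Y)`. -/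
def gL6 (γ : G) :
    TensorProduct k
      (TensorProduct k (Hc.H γ) (TensorProduct k (Hc.H γ⁻¹) (Hc.H γ)))
      (TensorProduct k (Hc.H γ) (TensorProduct k (Hc.H γ⁻¹) (Hc.H γ))) →ₗ[k] Hc.H γ⁻¹ :=
  LinearMap.mul' k _ ∘ₗ
    TensorProduct.map (LinearMap.mul' k _ ∘ₗ TensorProduct.map (Hc.S γ) (Hc.S γ)) (gQ γ) ∘ₗ
    TensorProduct.map (TensorProduct.comm k _ _).toLinearMap LinearMap.id ∘ₗ
    (TensorProduct.tensorTensorTensorComm k _ _ _ _).toLinearMap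

@[simp] theorem gL6_tmul (γ : G) (p q : Hc.H γ)
    (X Y : TensorProduct k (Hc.H γ⁻¹) (Hc.H γ)) :
    gL6 γ ((p ⊗ₜ[k] X) ⊗ₜ[k] (q ⊗ₜ[k] Y))
      = (Hc.S γ q * Hc.S γ p) * gQ γ (X ⊗ₜ[k] Y) := by
  simp [gL6]

/-- `(e ⊗ r) ⊗ (q ⊗ w) ↦ (S q * e) * gF2 (r ⊗ w)`. -/
def gL6' (γ : G) :
    TensorProduct k (TensorProduct k (Hc.H γ⁻¹) (Hc.H γ))
      (TensorProduct k (Hc.H γ) (TensorProduct k (Hc.H γ⁻¹) (Hc.H γ))) →ₗ[k] Hc.H γ⁻¹ :=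
  LinearMap.mul' k _ ∘ₗ
    TensorProduct.map (gB γ) (gF2 γ) ∘ₗ
    TensorProduct.map (TensorProduct.comm k _ _).toLinearMap LinearMap.id ∘ₗ
    (TensorProduct.tensorTensorTensorComm k _ _ _ _).toLinearMap

@[simp] theorem gL6'_tmul (γ : G) (e : Hc.H γ⁻¹) (r q : Hc.H γ)
    (w : TensorProduct k (Hc.H γ⁻¹) (Hc.H γ)) :
    gL6' γ ((e ⊗ₜ[k] r) ⊗ₜ[k] (q ⊗ₜ[k] w))
      = (Hc.S γ q * e) * gF2 γ (r ⊗ₜ[k] w) := by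
  simp [gL6']

/-- `p ⊗ c ↦ ε(c) • S p`. -/
def gK (γ : G) : TensorProduct k (Hc.H γ) (Hc.H (γ⁻¹ * γ)) →ₗ[k] Hc.H γ⁻¹ :=
  Hc.S γ ∘ₗ (TensorProduct.rid k (Hc.H γ)).toLinearMap ∘ₗ
    TensorProduct.map LinearMap.id (Hc.ε.toLinearMap ∘ₗ famCast (k := k) (inv_mul_cancel γ))

@[simp] theorem gK_tmul (γ : G) (p : Hc.H γ) (c : Hc.H (γ⁻¹ * γ)) :
    gK γ (p ⊗ₜ[k] c) = Hc.ε (famCast (k := k) (inv_mul_cancel γ) c) • Hc.S γ p := by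
  simp [gK]

theorem gLP_counit (γ : G) (w v : TensorProduct k (Hc.H γ) (Hc.H (γ⁻¹ * γ))) :
    gLP γ (Algebra.linearMap k (Hc.H γ⁻¹) ∘ₗ Hc.ε.toLinearMap ∘ₗ
        famCast (k := k) (inv_mul_cancel γ)) (w ⊗ₜ[k] v)
      = gK γ v * gK γ w := by
  induction w using TensorProduct.induction_on with
  | zero => simp
  | add w1 w2 h1 h2 =>
      rw [add_tmul, map_add, h1, h2, map_add, mul_add]
  | tmul p c =>
      induction v using TensorProduct.induction_on with
      | zero => simp
      | add v1 v2 h1 h2 =>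
          rw [tmul_add, map_add, h1, h2, map_add, add_mul]
      | tmul q d =>
          rw [gLP_tmul, gK_tmul, gK_tmul]
          simp only [LinearMap.comp_apply, AlgHom.toLinearMap_apply, famCast_mulH, map_mul,
            Algebra.linearMap_apply, Algebra.algebraMap_eq_smul_one]
          simp [mul_smul_comm, smul_mul_assoc, smul_smul, mul_comm]

theorem gQ_mul (γ : G) (X Y : TensorProduct k (Hc.H γ⁻¹) (Hc.H γ)) :
    gQ γ (X ⊗ₜ[k] Y)
      = LinearMap.mul' k (Hc.H γ⁻¹)
          (TensorProduct.map LinearMap.id (Hc.S γ) (X * Y)) := by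
  induction X using TensorProduct.induction_on with
  | zero => simp
  | add X1 X2 h1 h2 => rw [add_tmul, map_add, h1, h2, add_mul, map_add, map_add]
  | tmul c₁ c₂ =>
      induction Y using TensorProduct.induction_on with
      | zero => simp
      | add Y1 Y2 h1 h2 => rw [tmul_add, map_add, h1, h2, mul_add, map_add, map_add]
      | tmul d₁ d₂ =>
          rw [Algebra.TensorProduct.tmul_mul_tmul]
          simp

theorem step_iia (γ : G) :
    gLP γ (LinearMap.mul' k (Hc.H γ⁻¹) ∘ₗ
        TensorProduct.map LinearMap.id (Hc.S γ) ∘ₗ (Hc.Δ γ⁻¹ γ).toLinearMap)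
      = gL6 γ ∘ₗ
        TensorProduct.map
          (TensorProduct.map LinearMap.id (Hc.Δ γ⁻¹ γ).toLinearMap)
          (TensorProduct.map LinearMap.id (Hc.Δ γ⁻¹ γ).toLinearMap) := by
  ext p c q d
  simp only [TensorProduct.AlgebraTensorModule.curry_apply, TensorProduct.curry_apply,
    LinearMap.coe_restrictScalars, LinearMap.comp_apply, TensorProduct.map_tmul, LinearMap.id_coe, id_eq,
    AlgHom.toLinearMap_apply, gLP_tmul, gL6_tmul, gQ_mul, LinearMap.compr₂_apply,
    TensorProduct.mk_apply]
  rw [← map_mul (Hc.Δ γ⁻¹ γ) c d]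

theorem step_iib (γ : G) :
    gL6 γ ∘ₗ
        TensorProduct.map (TensorProduct.assoc k (Hc.H γ) (Hc.H γ⁻¹) (Hc.H γ)).toLinearMap
          LinearMap.id
      = gL6' γ ∘ₗ
        TensorProduct.map (TensorProduct.map (gB γ) LinearMap.id) LinearMap.id := by
  ext p c₁ r q d₁ d₂
  simp [TensorProduct.AlgebraTensorModule.curry_apply, TensorProduct.curry_apply,
    LinearMap.coe_restrictScalars, mul_assoc]

theorem step_iic (γ : G) :
    gL6' γ ∘ₗ
        TensorProduct.map
          (TensorProduct.map (Algebra.linearMap k (Hc.H γ⁻¹) ∘ₗ Hc.ε.toLinearMap ∘ₗ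
            famCast (k := k) (mul_inv_cancel γ)) LinearMap.id)
          LinearMap.id
      = gL7 γ ∘ₗ
        TensorProduct.map
          ((TensorProduct.lid k (Hc.H γ)).toLinearMap ∘ₗ
            TensorProduct.map (Hc.ε.toLinearMap ∘ₗ famCast (k := k) (mul_inv_cancel γ))
              LinearMap.id)
          LinearMap.id := by
  ext u r q d₁ d₂
  simp [TensorProduct.AlgebraTensorModule.curry_apply, TensorProduct.curry_apply,
    LinearMap.coe_restrictScalars, LinearMap.comp_apply, TensorProduct.map_tmul,
    AlgHom.toLinearMap_apply, Algebra.linearMap_apply, Algebra.algebraMap_eq_smul_one,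
    TensorProduct.lid_tmul, gL6'_tmul, gL7_tmul, LinearEquiv.coe_coe,
    TensorProduct.smul_tmul', tmul_smul, map_smul, gF2_tmul, smul_mul_assoc,
    mul_smul_comm, one_mul, mul_one, smul_smul]

theorem step_iid (γ : G) :
    gL7 γ ∘ₗ TensorProduct.map LinearMap.id
        (TensorProduct.assoc k (Hc.H γ) (Hc.H γ⁻¹) (Hc.H γ)).toLinearMap
      = gF2 γ ∘ₗ TensorProduct.map LinearMap.id
        (TensorProduct.map (gB γ) LinearMap.id) := by
  ext r q d₁ d₂
  simp [TensorProduct.AlgebraTensorModule.curry_apply, TensorProduct.curry_apply,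
    LinearMap.coe_restrictScalars, mul_assoc]

theorem step_iie (γ : G) :
    gF2 γ ∘ₗ TensorProduct.map LinearMap.id
        (TensorProduct.map (Algebra.linearMap k (Hc.H γ⁻¹) ∘ₗ Hc.ε.toLinearMap ∘ₗ
          famCast (k := k) (mul_inv_cancel γ)) LinearMap.id)
      = Hc.S γ ∘ₗ LinearMap.mul' k (Hc.H γ) ∘ₗ TensorProduct.map LinearMap.id
        ((TensorProduct.lid k (Hc.H γ)).toLinearMap ∘ₗ
          TensorProduct.map (Hc.ε.toLinearMap ∘ₗ famCast (k := k) (mul_inv_cancel γ))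
            LinearMap.id) := by
  ext r u s
  simp only [TensorProduct.AlgebraTensorModule.curry_apply, TensorProduct.curry_apply,
    LinearMap.coe_restrictScalars, LinearMap.comp_apply, TensorProduct.map_tmul, LinearMap.id_coe, id_eq,
    AlgHom.toLinearMap_apply, Algebra.linearMap_apply, Algebra.algebraMap_eq_smul_one,
    TensorProduct.lid_tmul, LinearMap.compr₂_apply, TensorProduct.mk_apply,
    TensorProduct.smul_tmul', tmul_smul, map_smul, gF2_tmul, LinearMap.mul'_apply,
    LinearEquiv.coe_coe, smul_mul_assoc, one_mul, mul_smul_comm]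

end AntiMult


section AntiMultMain

theorem S_antimul (γ : G) (a b : Hc.H γ) :
    Hc.S γ (a * b) = Hc.S γ b * Hc.S γ a := by
  have e1 : γ = γ * (γ⁻¹ * γ) := by rw [inv_mul_cancel, mul_one]
  have e2 : γ = γ * γ⁻¹ * γ := by rw [mul_inv_cancel, one_mul]
  have hBo : gB γ ∘ₗ (Hc.Δ γ γ⁻¹).toLinearMap
      = Algebra.linearMap k (Hc.H γ⁻¹) ∘ₗ Hc.ε.toLinearMap ∘ₗ
          famCast (k := k) (mul_inv_cancel γ) := by
    rw [gB, LinearMap.comp_assoc]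
    exact A0 γ
  have hcoa : ∀ z : Hc.H γ,
      TensorProduct.map LinearMap.id (Hc.Δ γ⁻¹ γ).toLinearMap
          ((Hc.Δ γ (γ⁻¹ * γ)) (famCast (k := k) e1 z))
        = (TensorProduct.assoc k (Hc.H γ) (Hc.H γ⁻¹) (Hc.H γ))
            (TensorProduct.map (Hc.Δ γ γ⁻¹).toLinearMap LinearMap.id
              ((Hc.Δ (γ * γ⁻¹) γ) (famCast (k := k) e2 z))) := by
    intro z
    have h := LinearMap.congr_fun (Hc.coassoc γ γ⁻¹ γ) (famCast (k := k) e2 z)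
    simp only [LinearMap.comp_apply, AlgHom.toLinearMap_apply, LinearEquiv.coe_coe,
      famCast_famCast_apply] at h
    exact h.symm
  have hk : ∀ z : Hc.H γ,
      gK γ ((Hc.Δ γ (γ⁻¹ * γ)) (famCast (k := k) e1 z)) = Hc.S γ z := by
    intro z
    simp only [gK, LinearMap.comp_apply, LinearEquiv.coe_coe]
    rw [CR γ e1 z]
  have hcl : ∀ z : Hc.H γ,
      (TensorProduct.lid k (Hc.H γ))
        (TensorProduct.map (Hc.ε.toLinearMap ∘ₗ famCast (k := k) (mul_inv_cancel γ))
          LinearMap.id ((Hc.Δ (γ * γ⁻¹) γ) (famCast (k := k) e2 z))) = z :=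
    fun z => CL γ e2 z
  have stepI : gLP γ (LinearMap.mul' k (Hc.H γ⁻¹) ∘ₗ
        TensorProduct.map LinearMap.id (Hc.S γ) ∘ₗ (Hc.Δ γ⁻¹ γ).toLinearMap)
        (((Hc.Δ γ (γ⁻¹ * γ)) (famCast (k := k) e1 a)) ⊗ₜ[k]
          ((Hc.Δ γ (γ⁻¹ * γ)) (famCast (k := k) e1 b)))
      = Hc.S γ b * Hc.S γ a := by
    rw [AR' γ, gLP_counit, hk, hk]
  have stepII : gLP γ (LinearMap.mul' k (Hc.H γ⁻¹) ∘ₗ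
        TensorProduct.map LinearMap.id (Hc.S γ) ∘ₗ (Hc.Δ γ⁻¹ γ).toLinearMap)
        (((Hc.Δ γ (γ⁻¹ * γ)) (famCast (k := k) e1 a)) ⊗ₜ[k]
          ((Hc.Δ γ (γ⁻¹ * γ)) (famCast (k := k) e1 b)))
      = Hc.S γ (a * b) := by
    rw [step_iia γ]
    simp only [LinearMap.comp_apply, TensorProduct.map_tmul]
    rw [hcoa a, hcoa b]
    have h2 := LinearMap.congr_fun (step_iib γ)
      ((TensorProduct.map (Hc.Δ γ γ⁻¹).toLinearMap LinearMap.id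
          ((Hc.Δ (γ * γ⁻¹) γ) (famCast (k := k) e2 a))) ⊗ₜ[k]
        ((TensorProduct.assoc k (Hc.H γ) (Hc.H γ⁻¹) (Hc.H γ))
          (TensorProduct.map (Hc.Δ γ γ⁻¹).toLinearMap LinearMap.id
            ((Hc.Δ (γ * γ⁻¹) γ) (famCast (k := k) e2 b)))))
    simp only [LinearMap.comp_apply, TensorProduct.map_tmul, LinearMap.id_coe, id_eq,
      LinearEquiv.coe_coe] at h2
    rw [h2]
    rw [map_map_left (gB γ) (Hc.Δ γ γ⁻¹).toLinearMap, hBo]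
    have h3 := LinearMap.congr_fun (step_iic γ)
      (((Hc.Δ (γ * γ⁻¹) γ) (famCast (k := k) e2 a)) ⊗ₜ[k]
        ((TensorProduct.assoc k (Hc.H γ) (Hc.H γ⁻¹) (Hc.H γ))
          (TensorProduct.map (Hc.Δ γ γ⁻¹).toLinearMap LinearMap.id
            ((Hc.Δ (γ * γ⁻¹) γ) (famCast (k := k) e2 b)))))
    simp only [LinearMap.comp_apply, TensorProduct.map_tmul, LinearMap.id_coe, id_eq,
      LinearEquiv.coe_coe] at h3
    rw [h3, hcl a]
    have h4 := LinearMap.congr_fun (step_iid γ)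
      (a ⊗ₜ[k] (TensorProduct.map (Hc.Δ γ γ⁻¹).toLinearMap LinearMap.id
        ((Hc.Δ (γ * γ⁻¹) γ) (famCast (k := k) e2 b))))
    simp only [LinearMap.comp_apply, TensorProduct.map_tmul, LinearMap.id_coe, id_eq,
      LinearEquiv.coe_coe] at h4
    rw [h4]
    rw [map_map_left (gB γ) (Hc.Δ γ γ⁻¹).toLinearMap, hBo]
    have h5 := LinearMap.congr_fun (step_iie γ)
      (a ⊗ₜ[k] ((Hc.Δ (γ * γ⁻¹) γ) (famCast (k := k) e2 b)))
    simp only [LinearMap.comp_apply, TensorProduct.map_tmul, LinearMap.id_coe, id_eq,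
      LinearEquiv.coe_coe] at h5
    rw [h5, hcl b]
    simp
  exact stepII.symm.trans stepI

end AntiMultMain


section MainAux

theorem copAntipode (β : G) (T : Hc.H β⁻¹ →ₗ[k] Hc.H β)
    (hT : ∀ y, Hc.S β (T y) = y) (hinj : Function.Injective (Hc.S β)) :
    LinearMap.mul' k (Hc.H β) ∘ₗ TensorProduct.map T LinearMap.id ∘ₗ
        (TensorProduct.comm k (Hc.H β) (Hc.H β⁻¹)).toLinearMap ∘ₗ (Hc.Δ β β⁻¹).toLinearMap
      = Algebra.linearMap k (Hc.H β) ∘ₗ Hc.ε.toLinearMap ∘ₗ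
          famCast (k := k) (mul_inv_cancel β) := by
  have key : Hc.S β ∘ₗ (LinearMap.mul' k (Hc.H β) ∘ₗ TensorProduct.map T LinearMap.id ∘ₗ
      (TensorProduct.comm k (Hc.H β) (Hc.H β⁻¹)).toLinearMap)
      = LinearMap.mul' k (Hc.H β⁻¹) ∘ₗ TensorProduct.map (Hc.S β) LinearMap.id := by
    ext q c
    simp only [TensorProduct.AlgebraTensorModule.curry_apply, TensorProduct.curry_apply,
      LinearMap.coe_restrictScalars, LinearMap.comp_apply, LinearEquiv.coe_coe,
      TensorProduct.comm_tmul, TensorProduct.map_tmul, LinearMap.id_coe, id_eq,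
      LinearMap.mul'_apply]
    rw [S_antimul, hT]
  refine LinearMap.ext fun z => hinj ?_
  have h1 := LinearMap.congr_fun key ((Hc.Δ β β⁻¹) z)
  simp only [LinearMap.comp_apply, LinearEquiv.coe_coe] at h1
  have h2 := LinearMap.congr_fun (A0 (Hc := Hc) β) z
  simp only [LinearMap.comp_apply, AlgHom.toLinearMap_apply] at h2
  simp only [LinearMap.comp_apply, AlgHom.toLinearMap_apply, LinearEquiv.coe_coe,
    Algebra.linearMap_apply]
  rw [h1, h2]
  simp [Algebra.algebraMap_eq_smul_one, S_one]

theorem rho_cast_right {α' δ δ' : G} (h : δ = δ') (hh : α' * δ = α' * δ')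
    (z : Ac.A (α' * δ)) :
    (Ac.ρ α' δ') (famCast (k := k) hh z)
      = TensorProduct.map LinearMap.id (famCast (k := k) h) ((Ac.ρ α' δ) z) := by
  subst h
  simp [TensorProduct.map_id]

theorem A_counit (α' δ : G) (hδ : δ = 1) (e : α' = α' * δ) (z : Ac.A α') :
    TensorProduct.map LinearMap.id (Hc.ε.toLinearMap ∘ₗ famCast (k := k) hδ)
      ((Ac.ρ α' δ) (famCast (k := k) e z)) = z ⊗ₜ[k] (1 : k) := by
  subst hδ
  have h1 := LinearMap.congr_fun (Ac.counit α') (famCast (k := k) e z)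
  simp only [LinearMap.comp_apply, AlgHom.toLinearMap_apply, LinearEquiv.coe_coe,
    famCast_famCast_apply] at h1
  rw [show famCast (k := k) (e.trans (mul_one α')) z
      = z from LinearMap.congr_fun (famCast_self _) z] at h1
  apply (TensorProduct.rid k (Ac.A α')).injective
  rw [show Hc.ε.toLinearMap ∘ₗ famCast (k := k) (rfl : (1:G) = 1)
      = Hc.ε.toLinearMap from by rw [famCast_self, LinearMap.comp_id]]
  rw [h1, TensorProduct.rid_tmul, one_smul]

/-- The comparison map `(A_α ⊗ H_β) ⊗ (M_α ⊗ H_β) → M_α ⊗ H_β`. -/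
def Theta (Mc : PoissonHopfModule Ac) (α' β' : G) :
    TensorProduct k (TensorProduct k (Ac.A α') (Hc.H β'))
        (TensorProduct k (Mc.M α') (Hc.H β')) →ₗ[k]
      TensorProduct k (Mc.M α') (Hc.H β') :=
  TensorProduct.map (TensorProduct.lift (Mc.dia α')) (LinearMap.mul' k (Hc.H β')) ∘ₗ
    (TensorProduct.tensorTensorTensorComm k (Ac.A α') (Hc.H β') (Mc.M α') (Hc.H β')).toLinearMap

@[simp] theorem Theta_tmul (Mc : PoissonHopfModule Ac) (α' β' : G)
    (p : Ac.A α') (q : Hc.H β') (m : Mc.M α') (h : Hc.H β') :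
    Theta Mc α' β' ((p ⊗ₜ[k] q) ⊗ₜ[k] (m ⊗ₜ[k] h))
      = (Mc.dia α' p m) ⊗ₜ[k] (q * h) := by
  simp [Theta]

end MainAux


/-- `M^A` is an `H`-subcomodule of `M` for a Poisson `(A,H)`-Hopf module over a
Hopf `G`-coalgebra with bijective antipode. -/
theorem diaInv_subcomodule (hS : ∀ α : G, Function.Bijective (Hc.S α))
    (Mc : PoissonHopfModule Ac) :
    ∀ (α β : G) (x : Mc.M (α * β)), (∀ a : Ac.A (α * β), Mc.dia (α * β) a x = 0) →
      Mc.ρ α β x ∈ LinearMap.range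
        (TensorProduct.map (Mc.diaInv α).subtype (LinearMap.id : Hc.H β →ₗ[k] Hc.H β)) := by
  intro α β x hx
  refine mem_range_map_subtype (Mc.diaInv α) (fun a => Mc.dia α a)
    (fun m hm => hm) _ (fun a' => ?_)
  classical
  set Te : Hc.H β ≃ₗ[k] Hc.H β⁻¹ := LinearEquiv.ofBijective (Hc.S β) (hS β) with hTe
  set T : Hc.H β⁻¹ →ₗ[k] Hc.H β := (Te.symm : Hc.H β⁻¹ →ₗ[k] Hc.H β) with hTdef
  have hT : ∀ y, Hc.S β (T y) = y := fun y => Te.apply_symm_apply y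
  have hcop := copAntipode (Hc := Hc) β T hT (hS β).1
  have e1 : α = α * β * β⁻¹ := by rw [mul_inv_cancel_right]
  -- the canonical untwisting map Λ
  set g0 : TensorProduct k (Hc.H β) (Hc.H β⁻¹) →ₗ[k] Hc.H β :=
    LinearMap.mul' k (Hc.H β) ∘ₗ TensorProduct.map T LinearMap.id ∘ₗ
      (TensorProduct.comm k (Hc.H β) (Hc.H β⁻¹)).toLinearMap with hg0
  have hg0Δ : g0 ∘ₗ (Hc.Δ β β⁻¹).toLinearMap
      = Algebra.linearMap k (Hc.H β) ∘ₗ Hc.ε.toLinearMap ∘ₗ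
          famCast (k := k) (mul_inv_cancel β) := by
    rw [hg0, LinearMap.comp_assoc, LinearMap.comp_assoc]
    exact hcop
  set Lam : TensorProduct k (Ac.A (α * β)) (Hc.H β⁻¹) →ₗ[k]
      TensorProduct k (Ac.A α) (Hc.H β) :=
    TensorProduct.map LinearMap.id g0 ∘ₗ
      (TensorProduct.assoc k (Ac.A α) (Hc.H β) (Hc.H β⁻¹)).toLinearMap ∘ₗ
      TensorProduct.map (Ac.ρ α β).toLinearMap LinearMap.id with hLam
  -- Key computation: Λ applied to the coaction of a' gives a' ⊗ 1.
  have hKA : Lam ((Ac.ρ (α * β) β⁻¹) (famCast (k := k) e1 a'))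
      = a' ⊗ₜ[k] (1 : Hc.H β) := by
    have hco := LinearMap.congr_fun (Ac.coassoc α β β⁻¹) (famCast (k := k) e1 a')
    simp only [LinearMap.comp_apply, AlgHom.toLinearMap_apply, LinearEquiv.coe_coe,
      famCast_famCast_apply] at hco
    rw [hLam]
    simp only [LinearMap.comp_apply, LinearEquiv.coe_coe]
    rw [hco, map_map_right g0 (Hc.Δ β β⁻¹).toLinearMap, hg0Δ,
      ← map_map_right (Algebra.linearMap k (Hc.H β))
        (Hc.ε.toLinearMap ∘ₗ famCast (k := k) (mul_inv_cancel β)),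
      A_counit α (β * β⁻¹) (mul_inv_cancel β) _ a']
    simp
  -- Λ composed with the coaction of dia lands in zero.
  have factB1 : ∀ (c : Hc.H β⁻¹) (W : TensorProduct k (Ac.A α) (Hc.H β)),
      TensorProduct.map LinearMap.id g0
          ((TensorProduct.assoc k (Ac.A α) (Hc.H β) (Hc.H β⁻¹)) (W ⊗ₜ[k] c))
        = TensorProduct.map LinearMap.id (LinearMap.mulLeft k (T c)) W := by
    intro c W
    induction W using TensorProduct.induction_on with
    | zero =>
        rw [zero_tmul, LinearEquiv.map_zero, map_zero, map_zero]
    | tmul p q => simp [hg0]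
    | add W1 W2 h1 h2 =>
        rw [add_tmul, LinearEquiv.map_add, map_add, map_add, h1, h2]
  have factB2 : ∀ (c : Hc.H β⁻¹) (W : TensorProduct k (Ac.A α) (Hc.H β))
      (u : TensorProduct k (Mc.M α) (Hc.H β)),
      Theta Mc α β ((TensorProduct.map LinearMap.id (LinearMap.mulLeft k (T c)) W) ⊗ₜ[k] u)
        = TensorProduct.map LinearMap.id (LinearMap.mulLeft k (T c))
            (Theta Mc α β (W ⊗ₜ[k] u)) := by
    intro c W u
    induction W using TensorProduct.induction_on with
    | zero => simp [zero_tmul]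
    | add W1 W2 h1 h2 => rw [map_add, add_tmul, add_tmul, map_add, h1, h2, map_add, map_add]
    | tmul p q =>
        induction u using TensorProduct.induction_on with
        | zero => simp [tmul_zero]
        | add u1 u2 h1 h2 => rw [tmul_add, tmul_add, map_add, map_add, h1, h2, map_add]
        | tmul m h => simp [mul_assoc]
  have fact0 : ∀ b : Ac.A (α * β),
      Mc.ρ α β (Mc.dia (α * β) b x)
        = Theta Mc α β ((Ac.ρ α β b) ⊗ₜ[k] (Mc.ρ α β x)) := by
    intro b
    have h := LinearMap.congr_fun (Mc.dia_comp α β) (b ⊗ₜ[k] x)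
    simpa only [LinearMap.comp_apply, TensorProduct.lift.tmul, TensorProduct.map_tmul,
      AlgHom.toLinearMap_apply, LinearEquiv.coe_coe, Theta] using h
  have fact1 : ∀ w : TensorProduct k (Ac.A (α * β)) (Hc.H β⁻¹),
      Theta Mc α β ((Lam w) ⊗ₜ[k] (Mc.ρ α β x)) = 0 := by
    intro w
    induction w using TensorProduct.induction_on with
    | zero => simp [zero_tmul]
    | add w1 w2 h1 h2 => rw [map_add, add_tmul, map_add, h1, h2, add_zero]
    | tmul b c =>
        rw [hLam]
        simp only [LinearMap.comp_apply, TensorProduct.map_tmul, LinearMap.id_coe, id_eq,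
          AlgHom.toLinearMap_apply, LinearEquiv.coe_coe]
        rw [factB1, factB2, ← fact0, hx b]
        simp
  have fact2 : ∀ u : TensorProduct k (Mc.M α) (Hc.H β),
      Theta Mc α β ((a' ⊗ₜ[k] (1 : Hc.H β)) ⊗ₜ[k] u)
        = LinearMap.rTensor (Hc.H β) (Mc.dia α a') u := by
    intro u
    induction u using TensorProduct.induction_on with
    | zero => simp [tmul_zero]
    | add u1 u2 h1 h2 => rw [tmul_add, map_add, h1, h2, map_add]
    | tmul m h => simp
  have final := fact1 ((Ac.ρ (α * β) β⁻¹) (famCast (k := k) e1 a'))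
  rw [hKA, fact2] at final
  exact final
end
end
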